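/- arXiv:2011.03892 — 3 statements merged into one kernel-verified Lean document; each statement's English description precedes it below -/
import Mathlib

section
/- There is a constant C depending only on k such that the graph G of the construction has at most C·n^{k-1}·d^{2k-2} edges. In particular: there are O(n^{k-1}·d^{2k-2}) coordinate-change and vector-change edges, O(n^{k-1}·d^{k-1}) swap edges, each vertex is incident to O(k) a-type or b-type back edges, the number of ba-type back edges between each pair B_i, A_i is O(n^{k-2}), and each vertex is incident to at most two fixed edges. -/
namespace DiamLB

/-! ## Generic directed-graph notions -/

/-- There is a directed walk of length `n` from `a` to `b`. -/
def HasWalkLen {V : Type*} (Adj : V → V → Prop) : ℕ → V → V → Prop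
  | 0, a, b => a = b
  | n + 1, a, b => ∃ c, Adj a c ∧ HasWalkLen Adj n c b

/-- `P 0, P 1, …, P n` is a directed walk. -/
def IsWalk {V : Type*} (Adj : V → V → Prop) (P : ℕ → V) (n : ℕ) : Prop :=
  ∀ t, t < n → Adj (P t) (P (t + 1))

/-- The shortest-path distance from `a` to `b` is at most `m`. -/
def DistLE {V : Type*} (Adj : V → V → Prop) (a b : V) (m : ℕ) : Prop :=
  ∃ n ≤ m, HasWalkLen Adj n a b

/-! ## The construction (Section 3, `k ≥ 5`) -/

/-- Boolean vectors of length `d`, i.e. elements of `{0,1}^d`. -/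
abbrev Vec (d : ℕ) := Fin d → Bool

/-- The all-ones vector. -/
def ones (d : ℕ) : Vec d := fun _ => true

/-- Tags naming the layers of the construction. -/
inductive Tag : Type
  | L (i : ℕ)
  | L' (i : ℕ)
  | A (i : ℕ)
  | B (i : ℕ)

/-- Potential vertices of the construction: a tagged partial tuple of vectors
(position `j : Fin k` holding the vector with 1-based index `j+1`) together with a
coordinate array `x` (1-based entry `x_ℓ` at position `ℓ-1 : Fin (k-1)`), plus the two
special vertices `uu` (the vertex `u`) and `vv` (the vertex `v`).  Vertices carrying no
coordinate array in the paper are modelled with the all-zero coordinate array. -/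
inductive Vert (k d : ℕ) : Type
  | node (tag : Tag) (p : Fin k → Option (Vec d)) (x : Fin (k - 1) → Fin d) : Vert k d
  | uu : Vert k d
  | vv : Vert k d

/-- The positions (0-based) satisfying `F` are filled by vectors of `S`, and the other
positions are empty. -/
def FillsS (k d : ℕ) (S : Finset (Vec d)) (F : ℕ → Prop) (p : Fin k → Option (Vec d)) :
    Prop :=
  ∀ j : Fin k, (F (j : ℕ) → ∃ a ∈ S, p j = some a) ∧ (¬ F (j : ℕ) → p j = none)

/-- The dummy (all-zero) coordinate array, used for vertices that carry no coordinate
array in the paper. -/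
def ZeroX (k d : ℕ) (x : Fin (k - 1) → Fin d) : Prop :=
  ∀ ℓ, (x ℓ : ℕ) = 0

/-- The compatibility condition between the vector tuple and the coordinate array of a
vertex of `L_i` (Table 1): for `1 ≤ j ≤ k-i` (the `a_j`), `a_j[x_ℓ] = 1` for all
`1 ≤ ℓ ≤ k-j`, and for `k-i+3 ≤ j ≤ k` (the `b_j`), `b_j[x_ℓ] = 1` for all
`k-j+1 ≤ ℓ ≤ k-1`.  (Everything is 0-based here: position `j` holds the vector with
1-based index `j+1`, and `x ℓ` is the 1-based coordinate `x_{ℓ+1}`.) -/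
def BitCond (k d : ℕ) (i : ℕ) (p : Fin k → Option (Vec d)) (x : Fin (k - 1) → Fin d) :
    Prop :=
  (∀ j : Fin k, (j : ℕ) < k - i → ∀ w, p j = some w →
    ∀ ℓ : Fin (k - 1), (ℓ : ℕ) < k - ((j : ℕ) + 1) → w (x ℓ) = true) ∧
  (∀ j : Fin k, k - i + 2 ≤ (j : ℕ) → ∀ w, p j = some w →
    ∀ ℓ : Fin (k - 1), k - ((j : ℕ) + 1) ≤ (ℓ : ℕ) → w (x ℓ) = true)

/-- The layer `L_i`, for `i = 1, …, k+1`. -/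
def setL (k d : ℕ) (S : Finset (Vec d)) (i : ℕ) : Set (Vert k d) :=
  { w | ∃ p x, w = Vert.node (Tag.L i) p x ∧
      ((i = 1 ∧ FillsS k d S (fun j => j < k - 1) p ∧ ZeroX k d x) ∨
       (i = k + 1 ∧ FillsS k d S (fun j => 1 ≤ j) p ∧ ZeroX k d x) ∨
       (2 ≤ i ∧ i ≤ k ∧ FillsS k d S (fun j => j < k - i ∨ k - i + 2 ≤ j) p ∧
         BitCond k d i p x)) }

/-- The layer `L'_i`, for `i = 3, …, k-1`: same vector tuples as `L_i` but with an
arbitrary coordinate array. -/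
def setL' (k d : ℕ) (S : Finset (Vec d)) (i : ℕ) : Set (Vert k d) :=
  { w | ∃ p x, w = Vert.node (Tag.L' i) p x ∧ 3 ≤ i ∧ i ≤ k - 1 ∧
      FillsS k d S (fun j => j < k - i ∨ k - i + 2 ≤ j) p }

/-- The set `A_i`, for `i = 4, …, k-1`: tuples `(a_1, …, a_{k-i})`. -/
def setA (k d : ℕ) (S : Finset (Vec d)) (i : ℕ) : Set (Vert k d) :=
  { w | ∃ p x, w = Vert.node (Tag.A i) p x ∧ 4 ≤ i ∧ i ≤ k - 1 ∧
      FillsS k d S (fun j => j < k - i) p ∧ ZeroX k d x }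

/-- The set `B_i`, for `i = 3, …, k-2`: tuples `(b_{k-i+3}, …, b_k)`. -/
def setB (k d : ℕ) (S : Finset (Vec d)) (i : ℕ) : Set (Vert k d) :=
  { w | ∃ p x, w = Vert.node (Tag.B i) p x ∧ 3 ≤ i ∧ i ≤ k - 2 ∧
      FillsS k d S (fun j => k - i + 2 ≤ j) p ∧ ZeroX k d x }

/-- `L = ∪_i L_i`. -/
def setLall (k d : ℕ) (S : Finset (Vec d)) : Set (Vert k d) := ⋃ i, setL k d S i

/-- `L' = ∪_i L'_i`. -/
def setL'all (k d : ℕ) (S : Finset (Vec d)) : Set (Vert k d) := ⋃ i, setL' k d S i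

/-- `A = ∪_i A_i`. -/
def setAall (k d : ℕ) (S : Finset (Vec d)) : Set (Vert k d) := ⋃ i, setA k d S i

/-- `B = ∪_i B_i`. -/
def setBall (k d : ℕ) (S : Finset (Vec d)) : Set (Vert k d) := ⋃ i, setB k d S i

/-- Level `i` is `L_i ∪ L'_i ∪ A_i ∪ B_i`. -/
def level (k d : ℕ) (S : Finset (Vec d)) (i : ℕ) : Set (Vert k d) :=
  setL k d S i ∪ setL' k d S i ∪ setA k d S i ∪ setB k d S i

/-- The vertex set of the graph `G`. -/
def VertexSet (k d : ℕ) (S : Finset (Vec d)) : Set (Vert k d) :=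
  setLall k d S ∪ setL'all k d S ∪ setAall k d S ∪ setBall k d S ∪ {Vert.uu, Vert.vv}

/-! ### Edges -/

/-- One orientation of the (undirected) swap edges.  Between `L_i` and `L_{i+1}`
(`2 ≤ i ≤ k-1`) the vector `a_{k-i}` (0-based position `k-i-1`) is exchanged for the
vector `b_{k-i+2}` (0-based position `k-i+1`), keeping the coordinate array; between
`L_1` and `L_2` the vector `a_{k-1}` is exchanged for a coordinate array; between
`L_{k+1}` and `L_k` the vector `b_2` is exchanged for a coordinate array. -/
def SwapE (k d : ℕ) (S : Finset (Vec d)) (α β : Vert k d) : Prop :=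
  (∃ i p x p' x', 2 ≤ i ∧ i ≤ k - 1 ∧
      α = Vert.node (Tag.L i) p x ∧ β = Vert.node (Tag.L (i + 1)) p' x' ∧
      α ∈ setL k d S i ∧ β ∈ setL k d S (i + 1) ∧ x' = x ∧
      (∀ j : Fin k, (j : ℕ) ≠ k - i - 1 → (j : ℕ) ≠ k - i + 1 → p' j = p j)) ∨
  (∃ p x p' x',
      α = Vert.node (Tag.L 1) p x ∧ β = Vert.node (Tag.L 2) p' x' ∧
      α ∈ setL k d S 1 ∧ β ∈ setL k d S 2 ∧
      (∀ j : Fin k, (j : ℕ) ≠ k - 2 → p' j = p j)) ∨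
  (∃ p x p' x',
      α = Vert.node (Tag.L (k + 1)) p x ∧ β = Vert.node (Tag.L k) p' x' ∧
      α ∈ setL k d S (k + 1) ∧ β ∈ setL k d S k ∧
      (∀ j : Fin k, (j : ℕ) ≠ 1 → p' j = p j))

/-- One orientation of the (undirected) vector-change edges between `L_i` and `L'_i`
(`3 ≤ i ≤ k-1`): same coordinate array, same vectors except possibly one of `a_{k-i}`
(position `k-i-1`) or `b_{k-i+3}` (position `k-i+2`). -/
def VecE (k d : ℕ) (S : Finset (Vec d)) (α β : Vert k d) : Prop :=
  ∃ i p x p' x', 3 ≤ i ∧ i ≤ k - 1 ∧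
    α = Vert.node (Tag.L i) p x ∧ β = Vert.node (Tag.L' i) p' x' ∧
    α ∈ setL k d S i ∧ β ∈ setL' k d S i ∧ x' = x ∧
    ((∀ j : Fin k, (j : ℕ) ≠ k - i - 1 → p' j = p j) ∨
     (∀ j : Fin k, (j : ℕ) ≠ k - i + 2 → p' j = p j))

/-- The (undirected, symmetric as stated) coordinate-change edges: two distinct
vertices with the same vector tuple, within each `L'_i`, between `L'_i` and `L_i`,
within `L_2` and within `L_k`. -/
def CoordE (k d : ℕ) (S : Finset (Vec d)) (α β : Vert k d) : Prop :=
  ∃ t t' p x x', α = Vert.node t p x ∧ β = Vert.node t' p x' ∧ α ≠ β ∧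
    ((∃ i, α ∈ setL' k d S i ∧ β ∈ setL' k d S i) ∨
     (∃ i, α ∈ setL' k d S i ∧ β ∈ setL k d S i) ∨
     (∃ i, α ∈ setL k d S i ∧ β ∈ setL' k d S i) ∨
     (α ∈ setL k d S 2 ∧ β ∈ setL k d S 2) ∨
     (α ∈ setL k d S k ∧ β ∈ setL k d S k))

/-- The directed `a`-type back edges: from `L_i ∪ L'_i` to the matching prefix in `A_i`;
from `A_i` to every vertex of `L'_4` with the matching prefix; and from `A_{k-1}`
to every vertex of `A_i` with the same first vector `a_1`. -/
def ABack (k d : ℕ) (S : Finset (Vec d)) (α β : Vert k d) : Prop :=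
  (∃ i t p x p' x', (α ∈ setL k d S i ∨ α ∈ setL' k d S i) ∧ β ∈ setA k d S i ∧
      α = Vert.node t p x ∧ β = Vert.node (Tag.A i) p' x' ∧
      (∀ j : Fin k, (j : ℕ) < k - i → p' j = p j)) ∨
  (∃ i p x p' x', α ∈ setA k d S i ∧ β ∈ setL' k d S 4 ∧
      α = Vert.node (Tag.A i) p x ∧ β = Vert.node (Tag.L' 4) p' x' ∧
      (∀ j : Fin k, (j : ℕ) < k - i → p' j = p j)) ∨
  (∃ i p x p' x', α ∈ setA k d S (k - 1) ∧ β ∈ setA k d S i ∧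
      α = Vert.node (Tag.A (k - 1)) p x ∧ β = Vert.node (Tag.A i) p' x' ∧
      (∀ j : Fin k, (j : ℕ) = 0 → p' j = p j))

/-- The directed `b`-type back edges: from `B_i` to every vertex of `L_i ∪ L'_i` with
the matching suffix; from every vertex of `L'_{k-2}` to the vertex of `B_i` with the
matching suffix; and from `B_i` to the vertex of `B_3` with the same last vector. -/
def BBack (k d : ℕ) (S : Finset (Vec d)) (α β : Vert k d) : Prop :=
  (∃ i t p x p' x', α ∈ setB k d S i ∧ (β ∈ setL k d S i ∨ β ∈ setL' k d S i) ∧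
      α = Vert.node (Tag.B i) p x ∧ β = Vert.node t p' x' ∧
      (∀ j : Fin k, k - i + 2 ≤ (j : ℕ) → p j = p' j)) ∨
  (∃ i p x p' x', α ∈ setL' k d S (k - 2) ∧ β ∈ setB k d S i ∧
      α = Vert.node (Tag.L' (k - 2)) p x ∧ β = Vert.node (Tag.B i) p' x' ∧
      (∀ j : Fin k, k - i + 2 ≤ (j : ℕ) → p' j = p j)) ∨
  (∃ i p x p' x', α ∈ setB k d S i ∧ β ∈ setB k d S 3 ∧
      α = Vert.node (Tag.B i) p x ∧ β = Vert.node (Tag.B 3) p' x' ∧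
      (∀ j : Fin k, (j : ℕ) = k - 1 → p' j = p j))

/-- The directed `ba`-type back edges: from every vertex of `B_i` to every vertex of
`A_i`, for `4 ≤ i ≤ k-2`. -/
def BABack (k d : ℕ) (S : Finset (Vec d)) (α β : Vert k d) : Prop :=
  ∃ i, 4 ≤ i ∧ i ≤ k - 2 ∧ α ∈ setB k d S i ∧ β ∈ setA k d S i

/-- The directed fixed edges: `L'_{k-2} → v`, `v → L_1 ∪ L_2`, `L_k ∪ L_{k+1} → u`,
and `u → L'_4`. -/
def FixedE (k d : ℕ) (S : Finset (Vec d)) (α β : Vert k d) : Prop :=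
  (α ∈ setL' k d S (k - 2) ∧ β = Vert.vv) ∨
  (α = Vert.vv ∧ (β ∈ setL k d S 1 ∨ β ∈ setL k d S 2)) ∨
  ((α ∈ setL k d S k ∨ α ∈ setL k d S (k + 1)) ∧ β = Vert.uu) ∨
  (α = Vert.uu ∧ β ∈ setL' k d S 4)

/-- The adjacency relation of the graph `G` (undirected edges appear in both
directions). -/
def Adj (k d : ℕ) (S : Finset (Vec d)) (α β : Vert k d) : Prop :=
  SwapE k d S α β ∨ SwapE k d S β α ∨ VecE k d S α β ∨ VecE k d S β α ∨
  CoordE k d S α β ∨ ABack k d S α β ∨ BBack k d S α β ∨ BABack k d S α β ∨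
  FixedE k d S α β

/-! ### Loops and covers (Section 5) -/

/-- `t` is the first time at which the walk `P` (of length `n`) visits `L_i`. -/
def FirstVisit (k d : ℕ) (S : Finset (Vec d)) (P : ℕ → Vert k d) (n i t : ℕ) : Prop :=
  t ≤ n ∧ P t ∈ setL k d S i ∧ ∀ s, s < t → P s ∉ setL k d S i

/-- `t` is the last time at which the walk `P` (of length `n`) visits `L_i`. -/
def LastVisit (k d : ℕ) (S : Finset (Vec d)) (P : ℕ → Vert k d) (n i t : ℕ) : Prop :=
  t ≤ n ∧ P t ∈ setL k d S i ∧ ∀ s, t < s → s ≤ n → P s ∉ setL k d S i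

/-- The layer `L_i` is in a loop: the walk `P` visits `L_i` at least twice. -/
def InLoop (k d : ℕ) (S : Finset (Vec d)) (P : ℕ → Vert k d) (n i : ℕ) : Prop :=
  ∃ t1 t2, t1 < t2 ∧ t2 ≤ n ∧ P t1 ∈ setL k d S i ∧ P t2 ∈ setL k d S i

/-- The walk `P` visits `A`. -/
def VisitsA (k d : ℕ) (S : Finset (Vec d)) (P : ℕ → Vert k d) (n : ℕ) : Prop :=
  ∃ t ≤ n, P t ∈ setAall k d S

/-- The walk `P` visits `B`. -/
def VisitsB (k d : ℕ) (S : Finset (Vec d)) (P : ℕ → Vert k d) (n : ℕ) : Prop :=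
  ∃ t ≤ n, P t ∈ setBall k d S

/-- The layer `L_i` covers the layer `L_m` (with respect to the walk `P` of length `n`):
for `3 ≤ i ≤ k-1`, `L_i` covers `L_{i-1}` if `L_{i-1}` is not in a loop, `L_i` is in a
loop, and the first and last vertices of `P` in `L_i` differ in the vector `b_{k-i+3}`
(0-based position `k-i+2`) and in the coordinate array; symmetrically `L_i` covers
`L_{i+1}` using the vector `a_{k-i}` (0-based position `k-i-1`).  Additionally `L_4`
covers both `L_3` and `L_2` if `P` visits `A`, and `L_{k-2}` covers both `L_{k-1}` and
`L_k` if `P` visits `B`. -/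
def Covers (k d : ℕ) (S : Finset (Vec d)) (P : ℕ → Vert k d) (n : ℕ) (i m : ℕ) : Prop :=
  (3 ≤ i ∧ i ≤ k - 1 ∧ m + 1 = i ∧ ¬ InLoop k d S P n m ∧ InLoop k d S P n i ∧
    ∃ t1 t2 p1 x1 p2 x2, FirstVisit k d S P n i t1 ∧ LastVisit k d S P n i t2 ∧
      P t1 = Vert.node (Tag.L i) p1 x1 ∧ P t2 = Vert.node (Tag.L i) p2 x2 ∧
      (∀ j : Fin k, (j : ℕ) = k - i + 2 → p1 j ≠ p2 j) ∧ x1 ≠ x2) ∨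
  (3 ≤ i ∧ i ≤ k - 1 ∧ m = i + 1 ∧ ¬ InLoop k d S P n m ∧ InLoop k d S P n i ∧
    ∃ t1 t2 p1 x1 p2 x2, FirstVisit k d S P n i t1 ∧ LastVisit k d S P n i t2 ∧
      P t1 = Vert.node (Tag.L i) p1 x1 ∧ P t2 = Vert.node (Tag.L i) p2 x2 ∧
      (∀ j : Fin k, (j : ℕ) = k - i - 1 → p1 j ≠ p2 j) ∧ x1 ≠ x2) ∨
  (i = 4 ∧ (m = 3 ∨ m = 2) ∧ VisitsA k d S P n) ∨
  (i = k - 2 ∧ (m = k - 1 ∨ m = k) ∧ VisitsB k d S P n)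



/-! ### Auxiliary lemmas for the edge count -/

section EdgeCountAux

variable {k d : ℕ} {S : Finset (Vec d)}

lemma ncard_le_card_of_mem {β : Type*} {s : Set β} {T : Finset β}
    (h : ∀ b ∈ s, b ∈ T) : s.ncard ≤ T.card := by
  have hsub : s ⊆ ↑T := fun b hb => h b hb
  calc s.ncard ≤ (↑T : Set β).ncard := Set.ncard_le_ncard hsub T.finite_toSet
    _ = T.card := Set.ncard_coe_finset T

/-- Tuples filled according to the boolean pattern `b`. -/
def PFin (k d : ℕ) (S : Finset (Vec d)) (b : Fin k → Bool) :
    Finset (Fin k → Option (Vec d)) :=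
  Fintype.piFinset (fun j => if b j then S.image some else {none})

lemma card_PFin (b : Fin k → Bool) :
    (PFin k d S b).card = S.card ^ (Finset.univ.filter (fun j => b j = true)).card := by
  classical
  rw [PFin, Fintype.card_piFinset,
    ← Finset.prod_filter_mul_prod_filter_not Finset.univ (fun j => b j = true)]
  have h1 : ∀ j ∈ Finset.univ.filter (fun j : Fin k => b j = true),
      ((if b j then S.image some else {none}).card) = S.card := by
    intro j hj
    rw [Finset.mem_filter] at hj
    rw [if_pos hj.2, Finset.card_image_of_injective _ (Option.some_injective _)]
  have h2 : ∀ j ∈ Finset.univ.filter (fun j : Fin k => ¬ b j = true),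
      ((if b j then S.image some else {none}).card) = 1 := by
    intro j hj
    rw [Finset.mem_filter] at hj
    rw [if_neg hj.2, Finset.card_singleton]
  rw [Finset.prod_congr rfl h1, Finset.prod_congr rfl h2, Finset.prod_const,
    Finset.prod_const_one, mul_one]

lemma mem_PFin {b : Fin k → Bool} {F : ℕ → Prop} {p : Fin k → Option (Vec d)}
    (hp : FillsS k d S F p) (hb : ∀ j : Fin k, b j = true ↔ F (j : ℕ)) :
    p ∈ PFin k d S b := by
  rw [PFin, Fintype.mem_piFinset]
  intro j
  by_cases h : b j = true
  · rw [if_pos h]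
    obtain ⟨a, haS, hpa⟩ := (hp j).1 ((hb j).1 h)
    rw [hpa]
    exact Finset.mem_image_of_mem some haS
  · rw [if_neg h, (hp j).2 (fun hF => h ((hb j).2 hF))]
    exact Finset.mem_singleton_self none

lemma fills_mem_insert {F : ℕ → Prop} {p : Fin k → Option (Vec d)}
    (hp : FillsS k d S F p) (j : Fin k) :
    p j ∈ insert none (S.image some) := by
  classical
  by_cases h : F (j : ℕ)
  · obtain ⟨a, haS, hpa⟩ := (hp j).1 h
    rw [hpa]
    exact Finset.mem_insert_of_mem (Finset.mem_image_of_mem some haS)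
  · rw [(hp j).2 h]
    exact Finset.mem_insert_self _ _

lemma filter_card_le_sub1 {b : Fin k → Bool} {t1 : Fin k} (h1 : ¬ b t1 = true) :
    (Finset.univ.filter (fun j => b j = true)).card ≤ k - 1 := by
  classical
  have hsub : Finset.univ.filter (fun j : Fin k => b j = true) ⊆ Finset.univ \ {t1} := by
    intro j hj
    rw [Finset.mem_filter] at hj
    rw [Finset.mem_sdiff, Finset.mem_singleton]
    exact ⟨Finset.mem_univ _, fun h => h1 (h ▸ hj.2)⟩
  calc _ ≤ (Finset.univ \ ({t1} : Finset (Fin k))).card := Finset.card_le_card hsub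
    _ = k - 1 := by
      rw [Finset.card_sdiff_of_subset (Finset.subset_univ _), Finset.card_singleton,
        Finset.card_univ, Fintype.card_fin]

lemma filter_card_le_sub2 {b : Fin k → Bool} {t1 t2 : Fin k} (h12 : t1 ≠ t2)
    (h1 : ¬ b t1 = true) (h2 : ¬ b t2 = true) :
    (Finset.univ.filter (fun j => b j = true)).card ≤ k - 2 := by
  classical
  have hsub : Finset.univ.filter (fun j : Fin k => b j = true)
      ⊆ Finset.univ \ {t1, t2} := by
    intro j hj
    rw [Finset.mem_filter] at hj
    rw [Finset.mem_sdiff, Finset.mem_insert, Finset.mem_singleton]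
    refine ⟨Finset.mem_univ _, ?_⟩
    rintro (rfl | rfl)
    · exact h1 hj.2
    · exact h2 hj.2
  calc _ ≤ (Finset.univ \ ({t1, t2} : Finset (Fin k))).card := Finset.card_le_card hsub
    _ = k - 2 := by
      rw [Finset.card_sdiff_of_subset (Finset.subset_univ _), Finset.card_univ, Fintype.card_fin,
        Finset.card_insert_of_notMem (by simpa using h12), Finset.card_singleton]

lemma filter_card_add_le_sub2 {b1 b2 : Fin k → Bool} {t1 t2 : Fin k} (h12 : t1 ≠ t2)
    (hdisj : ∀ j, ¬ (b1 j = true ∧ b2 j = true))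
    (h11 : ¬ b1 t1 = true) (h12' : ¬ b1 t2 = true)
    (h21 : ¬ b2 t1 = true) (h22 : ¬ b2 t2 = true) :
    (Finset.univ.filter (fun j => b1 j = true)).card
      + (Finset.univ.filter (fun j => b2 j = true)).card ≤ k - 2 := by
  classical
  have hd : Disjoint (Finset.univ.filter (fun j : Fin k => b1 j = true))
      (Finset.univ.filter (fun j : Fin k => b2 j = true)) := by
    rw [Finset.disjoint_left]
    intro j hj1 hj2
    rw [Finset.mem_filter] at hj1 hj2
    exact hdisj j ⟨hj1.2, hj2.2⟩
  rw [← Finset.card_union_of_disjoint hd, ← Finset.filter_or]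
  have heq : Finset.univ.filter (fun j : Fin k => b1 j = true ∨ b2 j = true)
      = Finset.univ.filter (fun j : Fin k => (b1 j || b2 j) = true) := by
    apply Finset.filter_congr
    intro j _
    simp
  rw [heq]
  exact filter_card_le_sub2 h12 (by simp [h11, h21]) (by simp [h12', h22])

lemma node_inj {t t' : Tag} {p p' : Fin k → Option (Vec d)} {x x'}
    (h : (Vert.node t p x : Vert k d) = Vert.node t' p' x') :
    t = t' ∧ p = p' ∧ x = x' := by
  injection h with h1 h2 h3
  exact ⟨h1, h2, h3⟩

lemma setL_elim_mid {i : ℕ} {p : Fin k → Option (Vec d)} {x}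
    (h : Vert.node (Tag.L i) p x ∈ setL k d S i) (h2 : 2 ≤ i) (hik : i ≤ k) :
    FillsS k d S (fun j => j < k - i ∨ k - i + 2 ≤ j) p := by
  obtain ⟨p', x', heq, hc⟩ := h
  obtain ⟨-, hp, hx⟩ := node_inj heq
  subst hp; subst hx
  rcases hc with ⟨h1, -, -⟩ | ⟨h1, -, -⟩ | ⟨-, -, hf, -⟩
  · omega
  · omega
  · exact hf

lemma setL_one_elim (hk5 : 5 ≤ k) {p : Fin k → Option (Vec d)} {x}
    (h : Vert.node (Tag.L 1) p x ∈ setL k d S 1) :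
    FillsS k d S (fun j => j < k - 1) p ∧ ZeroX k d x := by
  obtain ⟨p', x', heq, hc⟩ := h
  obtain ⟨-, hp, hx⟩ := node_inj heq
  subst hp; subst hx
  rcases hc with ⟨-, hf, hz⟩ | ⟨h1, -, -⟩ | ⟨h1, -, -, -⟩
  · exact ⟨hf, hz⟩
  · omega
  · omega

lemma setL_top_elim (hk5 : 5 ≤ k) {p : Fin k → Option (Vec d)} {x}
    (h : Vert.node (Tag.L (k + 1)) p x ∈ setL k d S (k + 1)) :
    FillsS k d S (fun j => 1 ≤ j) p ∧ ZeroX k d x := by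
  obtain ⟨p', x', heq, hc⟩ := h
  obtain ⟨-, hp, hx⟩ := node_inj heq
  subst hp; subst hx
  rcases hc with ⟨h1, -, -⟩ | ⟨-, hf, hz⟩ | ⟨-, h1, -, -⟩
  · omega
  · exact ⟨hf, hz⟩
  · omega

lemma setL'_elim {i : ℕ} {p : Fin k → Option (Vec d)} {x}
    (h : Vert.node (Tag.L' i) p x ∈ setL' k d S i) :
    3 ≤ i ∧ i ≤ k - 1 ∧ FillsS k d S (fun j => j < k - i ∨ k - i + 2 ≤ j) p := by
  obtain ⟨p', x', heq, h3, h4, hf⟩ := h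
  obtain ⟨-, hp, -⟩ := node_inj heq
  subst hp
  exact ⟨h3, h4, hf⟩

lemma setA_elim {i : ℕ} {p : Fin k → Option (Vec d)} {x}
    (h : Vert.node (Tag.A i) p x ∈ setA k d S i) :
    4 ≤ i ∧ i ≤ k - 1 ∧ FillsS k d S (fun j => j < k - i) p ∧ ZeroX k d x := by
  obtain ⟨p', x', heq, h3, h4, hf, hz⟩ := h
  obtain ⟨-, hp, hx⟩ := node_inj heq
  subst hp; subst hx
  exact ⟨h3, h4, hf, hz⟩

lemma setB_elim {i : ℕ} {p : Fin k → Option (Vec d)} {x}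
    (h : Vert.node (Tag.B i) p x ∈ setB k d S i) :
    3 ≤ i ∧ i ≤ k - 2 ∧ FillsS k d S (fun j => k - i + 2 ≤ j) p ∧ ZeroX k d x := by
  obtain ⟨p', x', heq, h3, h4, hf, hz⟩ := h
  obtain ⟨-, hp, hx⟩ := node_inj heq
  subst hp; subst hx
  exact ⟨h3, h4, hf, hz⟩

lemma setL_shape {w : Vert k d} {i : ℕ} (h : w ∈ setL k d S i) :
    ∃ p x, w = Vert.node (Tag.L i) p x ∧ (i = 1 ∨ i = k + 1 ∨ (2 ≤ i ∧ i ≤ k)) := by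
  obtain ⟨p, x, heq, hc⟩ := h
  refine ⟨p, x, heq, ?_⟩
  rcases hc with ⟨h1, -, -⟩ | ⟨h1, -, -⟩ | ⟨h1, h2, -, -⟩
  · exact Or.inl h1
  · exact Or.inr (Or.inl h1)
  · exact Or.inr (Or.inr ⟨h1, h2⟩)

lemma setL'_shape {w : Vert k d} {i : ℕ} (h : w ∈ setL' k d S i) :
    ∃ p x, w = Vert.node (Tag.L' i) p x ∧ 3 ≤ i ∧ i ≤ k - 1 := by
  obtain ⟨p, x, heq, h3, h4, -⟩ := h
  exact ⟨p, x, heq, h3, h4⟩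

lemma setA_shape {w : Vert k d} {i : ℕ} (h : w ∈ setA k d S i) :
    ∃ p x, w = Vert.node (Tag.A i) p x ∧ 4 ≤ i ∧ i ≤ k - 1 := by
  obtain ⟨p, x, heq, h3, h4, -⟩ := h
  exact ⟨p, x, heq, h3, h4⟩

lemma setB_shape {w : Vert k d} {i : ℕ} (h : w ∈ setB k d S i) :
    ∃ p x, w = Vert.node (Tag.B i) p x ∧ 3 ≤ i ∧ i ≤ k - 2 := by
  obtain ⟨p, x, heq, h3, h4, -⟩ := h
  exact ⟨p, x, heq, h3, h4⟩

lemma zeroX_eq (hd0 : 0 < d) {x : Fin (k - 1) → Fin d} (h : ZeroX k d x) :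
    x = fun _ => (⟨0, hd0⟩ : Fin d) :=
  funext fun ℓ => Fin.ext (h ℓ)

/-- The tuple obtained by keeping the first `k - i` entries. -/
def maskA (k d i : ℕ) (p : Fin k → Option (Vec d)) : Fin k → Option (Vec d) :=
  fun j => if (j : ℕ) < k - i then p j else none

/-- The tuple obtained by keeping the entries at positions `≥ k - i + 2`. -/
def maskB (k d i : ℕ) (p : Fin k → Option (Vec d)) : Fin k → Option (Vec d) :=
  fun j => if k - i + 2 ≤ (j : ℕ) then p j else none

lemma eq_maskA {i : ℕ} {p q : Fin k → Option (Vec d)}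
    (hq : FillsS k d S (fun j => j < k - i) q)
    (hpq : ∀ j : Fin k, (j : ℕ) < k - i → q j = p j) : q = maskA k d i p := by
  funext j
  show q j = if (j : ℕ) < k - i then p j else none
  by_cases hj : (j : ℕ) < k - i
  · rw [if_pos hj]; exact hpq j hj
  · rw [if_neg hj]; exact (hq j).2 hj

lemma eq_maskB {i : ℕ} {p q : Fin k → Option (Vec d)}
    (hq : FillsS k d S (fun j => k - i + 2 ≤ j) q)
    (hpq : ∀ j : Fin k, k - i + 2 ≤ (j : ℕ) → q j = p j) : q = maskB k d i p := by
  funext j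
  show q j = if k - i + 2 ≤ (j : ℕ) then p j else none
  by_cases hj : k - i + 2 ≤ (j : ℕ)
  · rw [if_pos hj]; exact hpq j hj
  · rw [if_neg hj]; exact (hq j).2 hj

/-- Boolean fill patterns. -/
def bL (k i : ℕ) : Fin k → Bool := fun j => decide ((j : ℕ) < k - i ∨ k - i + 2 ≤ (j : ℕ))
def bA (k i : ℕ) : Fin k → Bool := fun j => decide ((j : ℕ) < k - i)
def bB (k i : ℕ) : Fin k → Bool := fun j => decide (k - i + 2 ≤ (j : ℕ))
def bOne (k : ℕ) : Fin k → Bool := fun j => decide ((j : ℕ) < k - 1)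
def bTop (k : ℕ) : Fin k → Bool := fun j => decide (1 ≤ (j : ℕ))

def TP (k d : ℕ) (S : Finset (Vec d)) : Finset (Fin k → Option (Vec d)) :=
  (Finset.Ico 2 (k + 2)).biUnion (fun i => PFin k d S (bL k i))
def TPA (k d : ℕ) (S : Finset (Vec d)) : Finset (Fin k → Option (Vec d)) :=
  (Finset.Ico 2 (k + 2)).biUnion (fun i => PFin k d S (bA k i))
def TPB (k d : ℕ) (S : Finset (Vec d)) : Finset (Fin k → Option (Vec d)) :=
  (Finset.Ico 2 (k + 2)).biUnion (fun i => PFin k d S (bB k i))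

lemma mem_TP {i : ℕ} (h2 : 2 ≤ i) (hik : i ≤ k + 1) {p : Fin k → Option (Vec d)}
    (hp : FillsS k d S (fun j => j < k - i ∨ k - i + 2 ≤ j) p) : p ∈ TP k d S :=
  Finset.mem_biUnion.2 ⟨i, Finset.mem_Ico.2 ⟨h2, by omega⟩,
    mem_PFin hp (fun j => by simp [bL])⟩

lemma mem_TPA {i : ℕ} (h2 : 2 ≤ i) (hik : i ≤ k + 1) {p : Fin k → Option (Vec d)}
    (hp : FillsS k d S (fun j => j < k - i) p) : p ∈ TPA k d S :=
  Finset.mem_biUnion.2 ⟨i, Finset.mem_Ico.2 ⟨h2, by omega⟩,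
    mem_PFin hp (fun j => by simp [bA])⟩

lemma mem_TPB {i : ℕ} (h2 : 2 ≤ i) (hik : i ≤ k + 1) {p : Fin k → Option (Vec d)}
    (hp : FillsS k d S (fun j => k - i + 2 ≤ j) p) : p ∈ TPB k d S :=
  Finset.mem_biUnion.2 ⟨i, Finset.mem_Ico.2 ⟨h2, by omega⟩,
    mem_PFin hp (fun j => by simp [bB])⟩

lemma card_bL_le (hk5 : 5 ≤ k) (hn : 1 ≤ S.card) {i : ℕ} (h2 : 2 ≤ i) :
    (PFin k d S (bL k i)).card ≤ S.card ^ (k - 2) := by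
  rw [card_PFin]
  refine Nat.pow_le_pow_right hn ?_
  refine filter_card_le_sub2 (t1 := ⟨k - i, by omega⟩) (t2 := ⟨k - i + 1, by omega⟩)
    ?_ ?_ ?_
  · simp only [ne_eq, Fin.mk.injEq]; omega
  · simp only [bL, decide_eq_true_eq]; omega
  · simp only [bL, decide_eq_true_eq]; omega

lemma card_bA_le (hk5 : 5 ≤ k) (hn : 1 ≤ S.card) {i : ℕ} (h2 : 2 ≤ i) :
    (PFin k d S (bA k i)).card ≤ S.card ^ (k - 2) := by
  rw [card_PFin]
  refine Nat.pow_le_pow_right hn ?_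
  refine filter_card_le_sub2 (t1 := ⟨k - i, by omega⟩) (t2 := ⟨k - i + 1, by omega⟩)
    ?_ ?_ ?_
  · simp only [ne_eq, Fin.mk.injEq]; omega
  · simp only [bA, decide_eq_true_eq]; omega
  · simp only [bA, decide_eq_true_eq]; omega

lemma card_bB_le (hk5 : 5 ≤ k) (hn : 1 ≤ S.card) (i : ℕ) :
    (PFin k d S (bB k i)).card ≤ S.card ^ (k - 2) := by
  rw [card_PFin]
  refine Nat.pow_le_pow_right hn ?_
  refine filter_card_le_sub2 (t1 := ⟨0, by omega⟩) (t2 := ⟨1, by omega⟩) ?_ ?_ ?_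
  · simp only [ne_eq, Fin.mk.injEq]; omega
  · simp only [bB, decide_eq_true_eq]; omega
  · simp only [bB, decide_eq_true_eq]; omega

lemma card_bOne_le (hk5 : 5 ≤ k) (hn : 1 ≤ S.card) :
    (PFin k d S (bOne k)).card ≤ S.card ^ (k - 1) := by
  rw [card_PFin]
  refine Nat.pow_le_pow_right hn ?_
  refine filter_card_le_sub1 (t1 := ⟨k - 1, by omega⟩) ?_
  simp only [bOne, decide_eq_true_eq]; omega

lemma card_bTop_le (hk5 : 5 ≤ k) (hn : 1 ≤ S.card) :
    (PFin k d S (bTop k)).card ≤ S.card ^ (k - 1) := by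
  rw [card_PFin]
  refine Nat.pow_le_pow_right hn ?_
  refine filter_card_le_sub1 (t1 := ⟨0, by omega⟩) ?_
  simp only [bTop, decide_eq_true_eq]; omega

lemma card_pairBA_le (hk5 : 5 ≤ k) (hn : 1 ≤ S.card) {i : ℕ} (h2 : 2 ≤ i) :
    (PFin k d S (bB k i)).card * (PFin k d S (bA k i)).card ≤ S.card ^ (k - 2) := by
  rw [card_PFin, card_PFin, ← pow_add]
  refine Nat.pow_le_pow_right hn ?_
  refine filter_card_add_le_sub2 (t1 := ⟨k - i, by omega⟩) (t2 := ⟨k - i + 1, by omega⟩)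
    ?_ ?_ ?_ ?_ ?_ ?_
  · simp only [ne_eq, Fin.mk.injEq]; omega
  · intro j; simp only [bB, bA, decide_eq_true_eq]; omega
  · simp only [bB, decide_eq_true_eq]; omega
  · simp only [bB, decide_eq_true_eq]; omega
  · simp only [bA, decide_eq_true_eq]; omega
  · simp only [bA, decide_eq_true_eq]; omega

lemma card_TP_le (hk5 : 5 ≤ k) (hn : 1 ≤ S.card) :
    (TP k d S).card ≤ k * S.card ^ (k - 2) := by
  refine Finset.card_biUnion_le.trans ?_
  calc ∑ i ∈ Finset.Ico 2 (k + 2), (PFin k d S (bL k i)).card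
      ≤ ∑ _i ∈ Finset.Ico 2 (k + 2), S.card ^ (k - 2) :=
        Finset.sum_le_sum (fun i hi => card_bL_le hk5 hn (Finset.mem_Ico.1 hi).1)
    _ = k * S.card ^ (k - 2) := by
        rw [Finset.sum_const, Nat.card_Ico, smul_eq_mul]
        congr 1

lemma card_TPA_le (hk5 : 5 ≤ k) (hn : 1 ≤ S.card) :
    (TPA k d S).card ≤ k * S.card ^ (k - 2) := by
  refine Finset.card_biUnion_le.trans ?_
  calc ∑ i ∈ Finset.Ico 2 (k + 2), (PFin k d S (bA k i)).card
      ≤ ∑ _i ∈ Finset.Ico 2 (k + 2), S.card ^ (k - 2) :=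
        Finset.sum_le_sum (fun i hi => card_bA_le hk5 hn (Finset.mem_Ico.1 hi).1)
    _ = k * S.card ^ (k - 2) := by
        rw [Finset.sum_const, Nat.card_Ico, smul_eq_mul]
        congr 1

lemma card_TPB_le (hk5 : 5 ≤ k) (hn : 1 ≤ S.card) :
    (TPB k d S).card ≤ k * S.card ^ (k - 2) := by
  refine Finset.card_biUnion_le.trans ?_
  calc ∑ i ∈ Finset.Ico 2 (k + 2), (PFin k d S (bB k i)).card
      ≤ ∑ _i ∈ Finset.Ico 2 (k + 2), S.card ^ (k - 2) :=
        Finset.sum_le_sum (fun i hi => card_bB_le hk5 hn i)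
    _ = k * S.card ^ (k - 2) := by
        rw [Finset.sum_const, Nat.card_Ico, smul_eq_mul]
        congr 1

lemma aback_fst_node {α β : Vert k d} (h : ABack k d S α β) :
    ∃ t p x, α = Vert.node t p x := by
  rcases h with ⟨i, t, p, x, p', x', -, -, heq, -, -⟩ |
    ⟨i, p, x, p', x', -, -, heq, -, -⟩ | ⟨i, p, x, p', x', -, -, heq, -, -⟩
  · exact ⟨_, _, _, heq⟩
  · exact ⟨_, _, _, heq⟩
  · exact ⟨_, _, _, heq⟩

lemma aback_snd_node {α β : Vert k d} (h : ABack k d S α β) :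
    ∃ t p x, β = Vert.node t p x := by
  rcases h with ⟨i, t, p, x, p', x', -, -, -, heq, -⟩ |
    ⟨i, p, x, p', x', -, -, -, heq, -⟩ | ⟨i, p, x, p', x', -, -, -, heq, -⟩
  · exact ⟨_, _, _, heq⟩
  · exact ⟨_, _, _, heq⟩
  · exact ⟨_, _, _, heq⟩

lemma bback_fst_node {α β : Vert k d} (h : BBack k d S α β) :
    ∃ t p x, α = Vert.node t p x := by
  rcases h with ⟨i, t, p, x, p', x', -, -, heq, -, -⟩ |
    ⟨i, p, x, p', x', -, -, heq, -, -⟩ | ⟨i, p, x, p', x', -, -, heq, -, -⟩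
  · exact ⟨_, _, _, heq⟩
  · exact ⟨_, _, _, heq⟩
  · exact ⟨_, _, _, heq⟩

lemma bback_snd_node {α β : Vert k d} (h : BBack k d S α β) :
    ∃ t p x, β = Vert.node t p x := by
  rcases h with ⟨i, t, p, x, p', x', -, -, -, heq, -⟩ |
    ⟨i, p, x, p', x', -, -, -, heq, -⟩ | ⟨i, p, x, p', x', -, -, -, heq, -⟩
  · exact ⟨_, _, _, heq⟩
  · exact ⟨_, _, _, heq⟩
  · exact ⟨_, _, _, heq⟩

end EdgeCountAux

/-- **edge count.**  There is a constant `C` depending only on `k` such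
that the graph `G` of the construction has at most `C·n^{k-1}·d^{2k-2}` edges.
In particular: there are `O(n^{k-1}·d^{2k-2})` coordinate-change and vector-change
edges, `O(n^{k-1}·d^{k-1})` swap edges, each vertex (outside `A ∪ B`) is incident to
`O(k)` `a`-type or `b`-type back edges, the number of `ba`-type back edges between each
pair `B_i, A_i` is `O(n^{k-2})`, and each vertex (other than `u` and `v`) is incident
to at most two fixed edges.  (Edges are counted as ordered pairs.) -/
theorem edge_count (k : ℕ) (hk : 5 ≤ k) :
    ∃ C : ℕ, ∀ d : ℕ, 1 ≤ d → ∀ S : Finset (Vec d), ones d ∈ S →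
      ({ e : Vert k d × Vert k d | VecE k d S e.1 e.2 ∨ VecE k d S e.2 e.1 ∨
          CoordE k d S e.1 e.2 }).ncard ≤ C * (S.card ^ (k - 1) * d ^ (2 * k - 2)) ∧
      ({ e : Vert k d × Vert k d | SwapE k d S e.1 e.2 ∨ SwapE k d S e.2 e.1 }).ncard
        ≤ C * (S.card ^ (k - 1) * d ^ (k - 1)) ∧
      (∀ w ∈ VertexSet k d S, w ∉ setAall k d S → w ∉ setBall k d S →
        ({ z : Vert k d | ABack k d S w z ∨ ABack k d S z w ∨
            BBack k d S w z ∨ BBack k d S z w }).ncard ≤ C * k) ∧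
      (∀ i : ℕ, ({ e : Vert k d × Vert k d |
          e.1 ∈ setB k d S i ∧ e.2 ∈ setA k d S i }).ncard ≤ C * S.card ^ (k - 2)) ∧
      (∀ w ∈ VertexSet k d S, w ≠ Vert.uu → w ≠ Vert.vv →
        ({ z : Vert k d | FixedE k d S w z ∨ FixedE k d S z w }).ncard ≤ 2) ∧
      ({ e : Vert k d × Vert k d | Adj k d S e.1 e.2 }).ncard
        ≤ C * (S.card ^ (k - 1) * d ^ (2 * k - 2)) := by
  classical
  refine ⟨100 * (k + 2) ^ 3, ?_⟩
  intro d hd S hS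
  have hn : 1 ≤ S.card := Finset.card_pos.2 ⟨_, hS⟩
  have hd0 : 0 < d := hd
  have hpow1 : S.card ^ (k - 2) * S.card = S.card ^ (k - 1) := by
    rw [← pow_succ]
    congr 1
    omega
  have hdd : d ^ (k - 1) * d ^ (k - 1) = d ^ (2 * k - 2) := by
    rw [← pow_add]
    congr 1
    omega
  have hdk : d ^ (k - 1) ≤ d ^ (2 * k - 2) := Nat.pow_le_pow_right hd0 (by omega)
  have hnk : S.card ^ (k - 2) ≤ S.card ^ (k - 1) := Nat.pow_le_pow_right hn (by omega)
  have hxcard : Fintype.card (Fin (k - 1) → Fin d) = d ^ (k - 1) := by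
    rw [Fintype.card_fun, Fintype.card_fin, Fintype.card_fin]
  have hwcard : (insert none (S.image some) : Finset (Option (Vec d))).card ≤ 2 * S.card := by
    refine le_trans (Finset.card_insert_le _ _) ?_
    have := Finset.card_image_le (s := S) (f := some)
    omega
  have hA1 : S.card ^ (k - 2) * d ^ (k - 1) ≤ S.card ^ (k - 1) * d ^ (2 * k - 2) :=
    Nat.mul_le_mul hnk hdk
  have hA2 : S.card ^ (k - 2) ≤ S.card ^ (k - 1) * d ^ (2 * k - 2) :=
    le_trans hnk (Nat.le_mul_of_pos_right _ (pow_pos hd0 _))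
  have hA3 : S.card ^ (k - 1) * d ^ (k - 1) ≤ S.card ^ (k - 1) * d ^ (2 * k - 2) :=
    Nat.mul_le_mul_left _ hdk
  have hco : (k + 2) * k ≤ (k + 2) ^ 3 := by
    have h3 : (k + 2) ^ 3 = (k + 2) * ((k + 2) * (k + 2)) := by ring
    rw [h3]
    refine Nat.mul_le_mul_left _ ?_
    calc k ≤ k + 2 := by omega
      _ ≤ (k + 2) * (k + 2) := Nat.le_mul_of_pos_left _ (by omega)
  have hco1 : 1 ≤ (k + 2) ^ 3 := Nat.one_le_pow _ _ (by omega)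
  have hco2 : k ≤ (k + 2) ^ 3 := by
    refine le_trans ?_ hco
    calc k ≤ (k + 2) * 1 := by omega
      _ ≤ (k + 2) * k := Nat.mul_le_mul_left _ (by omega)
  have hE1 : ∃ E : Finset (Vert k d × Vert k d),
      (∀ α β : Vert k d, VecE k d S α β → (α, β) ∈ E) ∧
      E.card ≤ 4 * ((k + 2) * k) * (S.card ^ (k - 1) * d ^ (k - 1)) := by
    refine ⟨((Finset.range (k + 2) ×ˢ TP k d S ×ˢ
          (Finset.univ : Finset (Fin (k - 1) → Fin d)) ×ˢ insert none (S.image some)).image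
        (fun a => (Vert.node (Tag.L a.1) a.2.1 a.2.2.1,
          Vert.node (Tag.L' a.1)
            (fun j => if (j : ℕ) = k - a.1 - 1 then a.2.2.2 else a.2.1 j) a.2.2.1)))
      ∪ ((Finset.range (k + 2) ×ˢ TP k d S ×ˢ
          (Finset.univ : Finset (Fin (k - 1) → Fin d)) ×ˢ insert none (S.image some)).image
        (fun a => (Vert.node (Tag.L a.1) a.2.1 a.2.2.1,
          Vert.node (Tag.L' a.1)
            (fun j => if (j : ℕ) = k - a.1 + 2 then a.2.2.2 else a.2.1 j) a.2.2.1))), ?_, ?_⟩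
    · rintro α β ⟨i, p, x, p', x', h3, h4, rfl, rfl, hαL, hβL, rfl, hor⟩
      have hpf := setL_elim_mid hαL (by omega) (by omega)
      obtain ⟨-, -, hpf'⟩ := setL'_elim hβL
      rcases hor with hoff | hoff
      · have hlt : k - i - 1 < k := by omega
        refine Finset.mem_union_left _ (Finset.mem_image.2
          ⟨(i, p, x', p' ⟨k - i - 1, hlt⟩), ?_, ?_⟩)
        · exact Finset.mem_product.2 ⟨Finset.mem_range.2 (by omega),
            Finset.mem_product.2 ⟨mem_TP (by omega) (by omega) hpf,
              Finset.mem_product.2 ⟨Finset.mem_univ _, fills_mem_insert hpf' _⟩⟩⟩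
        · show (Vert.node (Tag.L i) p x', Vert.node (Tag.L' i)
              (fun j => if (j : ℕ) = k - i - 1 then p' ⟨k - i - 1, hlt⟩ else p j) x')
            = (Vert.node (Tag.L i) p x', Vert.node (Tag.L' i) p' x')
          have hq : (fun j : Fin k =>
              if (j : ℕ) = k - i - 1 then p' ⟨k - i - 1, hlt⟩ else p j) = p' := by
            funext j
            by_cases hj : (j : ℕ) = k - i - 1
            · rw [if_pos hj]
              exact congrArg p' (Fin.ext hj.symm)
            · rw [if_neg hj]
              exact (hoff j hj).symm
          rw [hq]
      · have hlt : k - i + 2 < k := by omega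
        refine Finset.mem_union_right _ (Finset.mem_image.2
          ⟨(i, p, x', p' ⟨k - i + 2, hlt⟩), ?_, ?_⟩)
        · exact Finset.mem_product.2 ⟨Finset.mem_range.2 (by omega),
            Finset.mem_product.2 ⟨mem_TP (by omega) (by omega) hpf,
              Finset.mem_product.2 ⟨Finset.mem_univ _, fills_mem_insert hpf' _⟩⟩⟩
        · show (Vert.node (Tag.L i) p x', Vert.node (Tag.L' i)
              (fun j => if (j : ℕ) = k - i + 2 then p' ⟨k - i + 2, hlt⟩ else p j) x')
            = (Vert.node (Tag.L i) p x', Vert.node (Tag.L' i) p' x')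
          have hq : (fun j : Fin k =>
              if (j : ℕ) = k - i + 2 then p' ⟨k - i + 2, hlt⟩ else p j) = p' := by
            funext j
            by_cases hj : (j : ℕ) = k - i + 2
            · rw [if_pos hj]
              exact congrArg p' (Fin.ext hj.symm)
            · rw [if_neg hj]
              exact (hoff j hj).symm
          rw [hq]
    · refine (Finset.card_union_le _ _).trans ?_
      have hprod : (Finset.range (k + 2) ×ˢ TP k d S ×ˢ
          (Finset.univ : Finset (Fin (k - 1) → Fin d)) ×ˢ
          insert none (S.image some)).card
          ≤ 2 * ((k + 2) * k) * (S.card ^ (k - 1) * d ^ (k - 1)) := by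
        rw [Finset.card_product, Finset.card_product, Finset.card_product,
          Finset.card_range, Finset.card_univ, hxcard]
        calc (k + 2) * ((TP k d S).card * (d ^ (k - 1) * (insert none (S.image some)).card))
            ≤ (k + 2) * ((k * S.card ^ (k - 2)) * (d ^ (k - 1) * (2 * S.card))) :=
              Nat.mul_le_mul_left _ (Nat.mul_le_mul (card_TP_le hk hn)
                (Nat.mul_le_mul_left _ hwcard))
          _ = 2 * ((k + 2) * k) * ((S.card ^ (k - 2) * S.card) * d ^ (k - 1)) := by ring
          _ = 2 * ((k + 2) * k) * (S.card ^ (k - 1) * d ^ (k - 1)) := by rw [hpow1]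
      calc _ ≤ (2 * ((k + 2) * k) * (S.card ^ (k - 1) * d ^ (k - 1)))
            + (2 * ((k + 2) * k) * (S.card ^ (k - 1) * d ^ (k - 1))) :=
            Nat.add_le_add (Finset.card_image_le.trans hprod) (Finset.card_image_le.trans hprod)
        _ = 4 * ((k + 2) * k) * (S.card ^ (k - 1) * d ^ (k - 1)) := by ring

  have hE3 : ∃ E : Finset (Vert k d × Vert k d),
      (∀ α β : Vert k d, CoordE k d S α β → (α, β) ∈ E) ∧
      E.card ≤ 4 * ((k + 2) * k) * (S.card ^ (k - 1) * d ^ (2 * k - 2)) := by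
    refine ⟨(((Finset.univ : Finset (Bool × Bool)) ×ˢ Finset.range (k + 2) ×ˢ TP k d S ×ˢ
          (Finset.univ : Finset (Fin (k - 1) → Fin d)) ×ˢ
          (Finset.univ : Finset (Fin (k - 1) → Fin d))).image
        (fun a => (Vert.node (if a.1.1 then Tag.L a.2.1 else Tag.L' a.2.1) a.2.2.1 a.2.2.2.1,
          Vert.node (if a.1.2 then Tag.L a.2.1 else Tag.L' a.2.1) a.2.2.1 a.2.2.2.2))), ?_, ?_⟩
    · rintro α β ⟨t, t', p, x, x', rfl, rfl, -, hcase⟩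
      rcases hcase with ⟨i, hα, hβ⟩ | ⟨i, hα, hβ⟩ | ⟨i, hα, hβ⟩ | ⟨hα, hβ⟩ | ⟨hα, hβ⟩
      · obtain ⟨p₁, x₁, heq, h3, h4⟩ := setL'_shape hα
        obtain ⟨rfl, -, -⟩ := node_inj heq
        obtain ⟨p₂, x₂, heq', -, -⟩ := setL'_shape hβ
        obtain ⟨rfl, -, -⟩ := node_inj heq'
        obtain ⟨-, -, hpf⟩ := setL'_elim hα
        refine Finset.mem_image.2 ⟨((false, false), i, p, x, x'), ?_, rfl⟩
        exact Finset.mem_product.2 ⟨Finset.mem_univ _,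
          Finset.mem_product.2 ⟨Finset.mem_range.2 (show i < k + 2 by omega),
            Finset.mem_product.2 ⟨mem_TP (by omega) (by omega) hpf,
              Finset.mem_product.2 ⟨Finset.mem_univ _, Finset.mem_univ _⟩⟩⟩⟩
      · obtain ⟨p₁, x₁, heq, h3, h4⟩ := setL'_shape hα
        obtain ⟨rfl, -, -⟩ := node_inj heq
        obtain ⟨p₂, x₂, heq', -⟩ := setL_shape hβ
        obtain ⟨rfl, -, -⟩ := node_inj heq'
        obtain ⟨-, -, hpf⟩ := setL'_elim hα
        refine Finset.mem_image.2 ⟨((false, true), i, p, x, x'), ?_, rfl⟩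
        exact Finset.mem_product.2 ⟨Finset.mem_univ _,
          Finset.mem_product.2 ⟨Finset.mem_range.2 (show i < k + 2 by omega),
            Finset.mem_product.2 ⟨mem_TP (by omega) (by omega) hpf,
              Finset.mem_product.2 ⟨Finset.mem_univ _, Finset.mem_univ _⟩⟩⟩⟩
      · obtain ⟨p₂, x₂, heq', h3, h4⟩ := setL'_shape hβ
        obtain ⟨rfl, -, -⟩ := node_inj heq'
        obtain ⟨p₁, x₁, heq, -⟩ := setL_shape hα
        obtain ⟨rfl, -, -⟩ := node_inj heq
        obtain ⟨-, -, hpf⟩ := setL'_elim hβ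
        refine Finset.mem_image.2 ⟨((true, false), i, p, x, x'), ?_, rfl⟩
        exact Finset.mem_product.2 ⟨Finset.mem_univ _,
          Finset.mem_product.2 ⟨Finset.mem_range.2 (show i < k + 2 by omega),
            Finset.mem_product.2 ⟨mem_TP (by omega) (by omega) hpf,
              Finset.mem_product.2 ⟨Finset.mem_univ _, Finset.mem_univ _⟩⟩⟩⟩
      · obtain ⟨p₁, x₁, heq, -⟩ := setL_shape hα
        obtain ⟨rfl, -, -⟩ := node_inj heq
        obtain ⟨p₂, x₂, heq', -⟩ := setL_shape hβ
        obtain ⟨rfl, -, -⟩ := node_inj heq'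
        have hpf := setL_elim_mid hα (by omega) (by omega)
        refine Finset.mem_image.2 ⟨((true, true), 2, p, x, x'), ?_, rfl⟩
        exact Finset.mem_product.2 ⟨Finset.mem_univ _,
          Finset.mem_product.2 ⟨Finset.mem_range.2 (show (2:ℕ) < k + 2 by omega),
            Finset.mem_product.2 ⟨mem_TP (by omega) (by omega) hpf,
              Finset.mem_product.2 ⟨Finset.mem_univ _, Finset.mem_univ _⟩⟩⟩⟩
      · obtain ⟨p₁, x₁, heq, -⟩ := setL_shape hα
        obtain ⟨rfl, -, -⟩ := node_inj heq
        obtain ⟨p₂, x₂, heq', -⟩ := setL_shape hβ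
        obtain ⟨rfl, -, -⟩ := node_inj heq'
        have hpf := setL_elim_mid hα (by omega) (by omega)
        refine Finset.mem_image.2 ⟨((true, true), k, p, x, x'), ?_, rfl⟩
        exact Finset.mem_product.2 ⟨Finset.mem_univ _,
          Finset.mem_product.2 ⟨Finset.mem_range.2 (show k < k + 2 by omega),
            Finset.mem_product.2 ⟨mem_TP (by omega) (by omega) hpf,
              Finset.mem_product.2 ⟨Finset.mem_univ _, Finset.mem_univ _⟩⟩⟩⟩
    · refine Finset.card_image_le.trans ?_
      simp only [Finset.card_product, Finset.card_univ, Finset.card_range, hxcard,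
        Fintype.card_prod, Fintype.card_bool]
      calc 2 * 2 * ((k + 2) * ((TP k d S).card * (d ^ (k - 1) * d ^ (k - 1))))
          = 4 * ((k + 2) * ((TP k d S).card * (d ^ (k - 1) * d ^ (k - 1)))) := by ring
        _
          ≤ 4 * ((k + 2) * ((k * S.card ^ (k - 2)) * (d ^ (k - 1) * d ^ (k - 1)))) :=
            Nat.mul_le_mul_left _ (Nat.mul_le_mul_left _
              (Nat.mul_le_mul_right _ (card_TP_le hk hn)))
        _ = 4 * ((k + 2) * k) * (S.card ^ (k - 2) * (d ^ (k - 1) * d ^ (k - 1))) := by ring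
        _ = 4 * ((k + 2) * k) * (S.card ^ (k - 2) * d ^ (2 * k - 2)) := by rw [hdd]
        _ ≤ 4 * ((k + 2) * k) * (S.card ^ (k - 1) * d ^ (2 * k - 2)) :=
            Nat.mul_le_mul_left _ (Nat.mul_le_mul_right _ hnk)

  have hES : ∃ E : Finset (Vert k d × Vert k d),
      (∀ α β : Vert k d, SwapE k d S α β → (α, β) ∈ E) ∧
      E.card ≤ (2 * ((k + 2) * k) + 2) * (S.card ^ (k - 1) * d ^ (k - 1)) := by
    refine ⟨((Finset.range (k + 2) ×ˢ TP k d S ×ˢ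
          (Finset.univ : Finset (Fin (k - 1) → Fin d)) ×ˢ insert none (S.image some)).image
        (fun a => (Vert.node (Tag.L a.1) a.2.1 a.2.2.1,
          Vert.node (Tag.L (a.1 + 1))
            (fun j => if (j : ℕ) = k - a.1 + 1 then a.2.2.2
              else if (j : ℕ) = k - a.1 - 1 then none else a.2.1 j) a.2.2.1)))
      ∪ ((PFin k d S (bOne k) ×ˢ (Finset.univ : Finset (Fin (k - 1) → Fin d))).image
        (fun a => (Vert.node (Tag.L 1) a.1 (fun _ => ⟨0, hd0⟩),
          Vert.node (Tag.L 2) (fun j => if (j : ℕ) = k - 2 then none else a.1 j) a.2)))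
      ∪ ((PFin k d S (bTop k) ×ˢ (Finset.univ : Finset (Fin (k - 1) → Fin d))).image
        (fun a => (Vert.node (Tag.L (k + 1)) a.1 (fun _ => ⟨0, hd0⟩),
          Vert.node (Tag.L k) (fun j => if (j : ℕ) = 1 then none else a.1 j) a.2))), ?_, ?_⟩
    · rintro α β (⟨i, p, x, p', x', h2, h4, rfl, rfl, hαL, hβL, rfl, hoff⟩ |
        ⟨p, x, p', x', rfl, rfl, hαL, hβL, hoff⟩ | ⟨p, x, p', x', rfl, rfl, hαL, hβL, hoff⟩)
      · have hpf := setL_elim_mid hαL (by omega) (by omega)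
        have hpf' := setL_elim_mid hβL (by omega) (by omega)
        have hlt : k - i + 1 < k := by omega
        refine Finset.mem_union_left _ (Finset.mem_union_left _ (Finset.mem_image.2
          ⟨(i, p, x', p' ⟨k - i + 1, hlt⟩), ?_, ?_⟩))
        · exact Finset.mem_product.2 ⟨Finset.mem_range.2 (by omega),
            Finset.mem_product.2 ⟨mem_TP (by omega) (by omega) hpf,
              Finset.mem_product.2 ⟨Finset.mem_univ _, fills_mem_insert hpf' _⟩⟩⟩
        · show (Vert.node (Tag.L i) p x', Vert.node (Tag.L (i + 1))
              (fun j => if (j : ℕ) = k - i + 1 then p' ⟨k - i + 1, hlt⟩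
                else if (j : ℕ) = k - i - 1 then none else p j) x')
            = (Vert.node (Tag.L i) p x', Vert.node (Tag.L (i + 1)) p' x')
          have hq : (fun j : Fin k => if (j : ℕ) = k - i + 1 then p' ⟨k - i + 1, hlt⟩
              else if (j : ℕ) = k - i - 1 then none else p j) = p' := by
            funext j
            by_cases hj1 : (j : ℕ) = k - i + 1
            · rw [if_pos hj1]
              exact congrArg p' (Fin.ext hj1.symm)
            · rw [if_neg hj1]
              by_cases hj2 : (j : ℕ) = k - i - 1
              · rw [if_pos hj2]
                exact ((hpf' j).2 (by omega)).symm
              · rw [if_neg hj2]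
                exact (hoff j hj2 hj1).symm
          rw [hq]
      · obtain ⟨hpf, hz⟩ := setL_one_elim hk hαL
        have hpf' := setL_elim_mid hβL (by omega) (by omega)
        refine Finset.mem_union_left _ (Finset.mem_union_right _ (Finset.mem_image.2
          ⟨(p, x'), ?_, ?_⟩))
        · exact Finset.mem_product.2 ⟨mem_PFin hpf (fun j => by simp [bOne]), Finset.mem_univ _⟩
        · show (Vert.node (Tag.L 1) p (fun _ => ⟨0, hd0⟩),
              Vert.node (Tag.L 2) (fun j => if (j : ℕ) = k - 2 then none else p j) x')
            = (Vert.node (Tag.L 1) p x, Vert.node (Tag.L 2) p' x')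
          rw [zeroX_eq hd0 hz]
          have hq : (fun j : Fin k => if (j : ℕ) = k - 2 then none else p j) = p' := by
            funext j
            by_cases hj : (j : ℕ) = k - 2
            · rw [if_pos hj]
              exact ((hpf' j).2 (by omega)).symm
            · rw [if_neg hj]
              exact (hoff j hj).symm
          rw [hq]
      · obtain ⟨hpf, hz⟩ := setL_top_elim hk hαL
        have hpf' := setL_elim_mid hβL (by omega) (by omega)
        refine Finset.mem_union_right _ (Finset.mem_image.2 ⟨(p, x'), ?_, ?_⟩)
        · exact Finset.mem_product.2 ⟨mem_PFin hpf (fun j => by simp [bTop]), Finset.mem_univ _⟩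
        · show (Vert.node (Tag.L (k + 1)) p (fun _ => ⟨0, hd0⟩),
              Vert.node (Tag.L k) (fun j => if (j : ℕ) = 1 then none else p j) x')
            = (Vert.node (Tag.L (k + 1)) p x, Vert.node (Tag.L k) p' x')
          rw [zeroX_eq hd0 hz]
          have hq : (fun j : Fin k => if (j : ℕ) = 1 then none else p j) = p' := by
            funext j
            by_cases hj : (j : ℕ) = 1
            · rw [if_pos hj]
              exact ((hpf' j).2 (by omega)).symm
            · rw [if_neg hj]
              exact (hoff j hj).symm
          rw [hq]
    · refine (Finset.card_union_le _ _).trans (le_trans (Nat.add_le_add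
        (Finset.card_union_le _ _) le_rfl) ?_)
      have hprod1 : (Finset.range (k + 2) ×ˢ TP k d S ×ˢ
          (Finset.univ : Finset (Fin (k - 1) → Fin d)) ×ˢ
          insert none (S.image some)).card
          ≤ 2 * ((k + 2) * k) * (S.card ^ (k - 1) * d ^ (k - 1)) := by
        rw [Finset.card_product, Finset.card_product, Finset.card_product,
          Finset.card_range, Finset.card_univ, hxcard]
        calc (k + 2) * ((TP k d S).card * (d ^ (k - 1) * (insert none (S.image some)).card))
            ≤ (k + 2) * ((k * S.card ^ (k - 2)) * (d ^ (k - 1) * (2 * S.card))) :=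
              Nat.mul_le_mul_left _ (Nat.mul_le_mul (card_TP_le hk hn)
                (Nat.mul_le_mul_left _ hwcard))
          _ = 2 * ((k + 2) * k) * ((S.card ^ (k - 2) * S.card) * d ^ (k - 1)) := by ring
          _ = 2 * ((k + 2) * k) * (S.card ^ (k - 1) * d ^ (k - 1)) := by rw [hpow1]
      have hprod2 : (PFin k d S (bOne k) ×ˢ
          (Finset.univ : Finset (Fin (k - 1) → Fin d))).card
          ≤ S.card ^ (k - 1) * d ^ (k - 1) := by
        rw [Finset.card_product, Finset.card_univ, hxcard]
        exact Nat.mul_le_mul_right _ (card_bOne_le hk hn)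
      have hprod3 : (PFin k d S (bTop k) ×ˢ
          (Finset.univ : Finset (Fin (k - 1) → Fin d))).card
          ≤ S.card ^ (k - 1) * d ^ (k - 1) := by
        rw [Finset.card_product, Finset.card_univ, hxcard]
        exact Nat.mul_le_mul_right _ (card_bTop_le hk hn)
      calc _ ≤ (2 * ((k + 2) * k) * (S.card ^ (k - 1) * d ^ (k - 1)) +
            S.card ^ (k - 1) * d ^ (k - 1)) + S.card ^ (k - 1) * d ^ (k - 1) :=
            Nat.add_le_add (Nat.add_le_add (Finset.card_image_le.trans hprod1)
              (Finset.card_image_le.trans hprod2)) (Finset.card_image_le.trans hprod3)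
        _ = (2 * ((k + 2) * k) + 2) * (S.card ^ (k - 1) * d ^ (k - 1)) := by ring

  have hEAB : ∃ E : Finset (Vert k d × Vert k d),
      (∀ α β : Vert k d, ABack k d S α β → (α, β) ∈ E) ∧
      E.card ≤ 4 * ((k + 2) * k) * (S.card ^ (k - 1) * d ^ (2 * k - 2)) := by
    refine ⟨(((Finset.univ : Finset Bool) ×ˢ Finset.range (k + 2) ×ˢ TP k d S ×ˢ
          (Finset.univ : Finset (Fin (k - 1) → Fin d))).image
        (fun a => (Vert.node (if a.1 then Tag.L a.2.1 else Tag.L' a.2.1) a.2.2.1 a.2.2.2,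
          Vert.node (Tag.A a.2.1) (maskA k d a.2.1 a.2.2.1) (fun _ => ⟨0, hd0⟩))))
      ∪ ((Finset.range (k + 2) ×ˢ TP k d S ×ˢ
          (Finset.univ : Finset (Fin (k - 1) → Fin d))).image
        (fun a => (Vert.node (Tag.A a.1) (maskA k d a.1 a.2.1) (fun _ => ⟨0, hd0⟩),
          Vert.node (Tag.L' 4) a.2.1 a.2.2)))
      ∪ ((Finset.range (k + 2) ×ˢ TPA k d S).image
        (fun a => (Vert.node (Tag.A (k - 1)) (maskA k d (k - 1) a.2) (fun _ => ⟨0, hd0⟩),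
          Vert.node (Tag.A a.1) a.2 (fun _ => ⟨0, hd0⟩)))), ?_, ?_⟩
    · rintro α β (⟨i, t, p, x, p', x', hmem, hβA, rfl, rfl, hpre⟩ |
        ⟨i, p, x, p', x', hαA, hβL4, rfl, rfl, hpre⟩ |
        ⟨i, p, x, p', x', hαA, hβA, rfl, rfl, h0⟩)
      · obtain ⟨h4i, hik, hfA, hzA⟩ := setA_elim hβA
        have hmask : p' = maskA k d i p := eq_maskA hfA (fun j hj => hpre j hj)
        rcases hmem with hL | hL'
        · obtain ⟨p₁, x₁, heq, -⟩ := setL_shape hL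
          obtain ⟨rfl, -, -⟩ := node_inj heq
          have hpf := setL_elim_mid hL (by omega) (by omega)
          refine Finset.mem_union_left _ (Finset.mem_union_left _ (Finset.mem_image.2
            ⟨(true, i, p, x), ?_, ?_⟩))
          · exact Finset.mem_product.2 ⟨Finset.mem_univ _,
              Finset.mem_product.2 ⟨Finset.mem_range.2 (show i < k + 2 by omega),
                Finset.mem_product.2 ⟨mem_TP (by omega) (by omega) hpf, Finset.mem_univ _⟩⟩⟩
          · show (Vert.node (Tag.L i) p x,
                Vert.node (Tag.A i) (maskA k d i p) (fun _ => ⟨0, hd0⟩))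
              = (Vert.node (Tag.L i) p x, Vert.node (Tag.A i) p' x')
            rw [hmask, zeroX_eq hd0 hzA]
        · obtain ⟨p₁, x₁, heq, -⟩ := setL'_shape hL'
          obtain ⟨rfl, -, -⟩ := node_inj heq
          obtain ⟨-, -, hpf⟩ := setL'_elim hL'
          refine Finset.mem_union_left _ (Finset.mem_union_left _ (Finset.mem_image.2
            ⟨(false, i, p, x), ?_, ?_⟩))
          · exact Finset.mem_product.2 ⟨Finset.mem_univ _,
              Finset.mem_product.2 ⟨Finset.mem_range.2 (show i < k + 2 by omega),
                Finset.mem_product.2 ⟨mem_TP (by omega) (by omega) hpf, Finset.mem_univ _⟩⟩⟩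
          · show (Vert.node (Tag.L' i) p x,
                Vert.node (Tag.A i) (maskA k d i p) (fun _ => ⟨0, hd0⟩))
              = (Vert.node (Tag.L' i) p x, Vert.node (Tag.A i) p' x')
            rw [hmask, zeroX_eq hd0 hzA]
      · obtain ⟨h4i, hik, hfA, hzA⟩ := setA_elim hαA
        obtain ⟨-, -, hpf⟩ := setL'_elim hβL4
        have hmask : p = maskA k d i p' := eq_maskA hfA (fun j hj => (hpre j hj).symm)
        refine Finset.mem_union_left _ (Finset.mem_union_right _ (Finset.mem_image.2
          ⟨(i, p', x'), ?_, ?_⟩))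
        · exact Finset.mem_product.2 ⟨Finset.mem_range.2 (show i < k + 2 by omega),
            Finset.mem_product.2 ⟨mem_TP (by omega) (by omega) hpf, Finset.mem_univ _⟩⟩
        · show (Vert.node (Tag.A i) (maskA k d i p') (fun _ => ⟨0, hd0⟩),
              Vert.node (Tag.L' 4) p' x')
            = (Vert.node (Tag.A i) p x, Vert.node (Tag.L' 4) p' x')
          rw [hmask, zeroX_eq hd0 hzA]
      · obtain ⟨-, -, hfA, hzA⟩ := setA_elim hαA
        obtain ⟨h4i, hik, hfA', hzA'⟩ := setA_elim hβA
        have hmask : p = maskA k d (k - 1) p' :=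
          eq_maskA hfA (fun j hj => (h0 j (by omega)).symm)
        refine Finset.mem_union_right _ (Finset.mem_image.2 ⟨(i, p'), ?_, ?_⟩)
        · exact Finset.mem_product.2 ⟨Finset.mem_range.2 (show i < k + 2 by omega),
            mem_TPA (by omega) (by omega) hfA'⟩
        · show (Vert.node (Tag.A (k - 1)) (maskA k d (k - 1) p') (fun _ => ⟨0, hd0⟩),
              Vert.node (Tag.A i) p' (fun _ => ⟨0, hd0⟩))
            = (Vert.node (Tag.A (k - 1)) p x, Vert.node (Tag.A i) p' x')
          rw [hmask, zeroX_eq hd0 hzA, zeroX_eq hd0 hzA']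
    · refine (Finset.card_union_le _ _).trans (le_trans (Nat.add_le_add
        (Finset.card_union_le _ _) le_rfl) ?_)
      have hprod1 : ((Finset.univ : Finset Bool) ×ˢ Finset.range (k + 2) ×ˢ TP k d S ×ˢ
          (Finset.univ : Finset (Fin (k - 1) → Fin d))).card
          ≤ 2 * ((k + 2) * k) * (S.card ^ (k - 2) * d ^ (k - 1)) := by
        rw [Finset.card_product, Finset.card_product, Finset.card_product,
          Finset.card_range, Finset.card_univ, Finset.card_univ, hxcard,
          Fintype.card_bool]
        calc 2 * ((k + 2) * ((TP k d S).card * d ^ (k - 1)))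
            ≤ 2 * ((k + 2) * ((k * S.card ^ (k - 2)) * d ^ (k - 1))) :=
              Nat.mul_le_mul_left _ (Nat.mul_le_mul_left _
                (Nat.mul_le_mul_right _ (card_TP_le hk hn)))
          _ = 2 * ((k + 2) * k) * (S.card ^ (k - 2) * d ^ (k - 1)) := by ring
      have hprod2 : (Finset.range (k + 2) ×ˢ TP k d S ×ˢ
          (Finset.univ : Finset (Fin (k - 1) → Fin d))).card
          ≤ (k + 2) * k * (S.card ^ (k - 2) * d ^ (k - 1)) := by
        rw [Finset.card_product, Finset.card_product, Finset.card_range,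
          Finset.card_univ, hxcard]
        calc (k + 2) * ((TP k d S).card * d ^ (k - 1))
            ≤ (k + 2) * ((k * S.card ^ (k - 2)) * d ^ (k - 1)) :=
              Nat.mul_le_mul_left _ (Nat.mul_le_mul_right _ (card_TP_le hk hn))
          _ = (k + 2) * k * (S.card ^ (k - 2) * d ^ (k - 1)) := by ring
      have hprod3 : (Finset.range (k + 2) ×ˢ TPA k d S).card
          ≤ (k + 2) * k * S.card ^ (k - 2) := by
        rw [Finset.card_product, Finset.card_range]
        calc (k + 2) * (TPA k d S).card
            ≤ (k + 2) * (k * S.card ^ (k - 2)) :=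
              Nat.mul_le_mul_left _ (card_TPA_le hk hn)
          _ = (k + 2) * k * S.card ^ (k - 2) := by ring
      calc _ ≤ (2 * ((k + 2) * k) * (S.card ^ (k - 2) * d ^ (k - 1)) +
            (k + 2) * k * (S.card ^ (k - 2) * d ^ (k - 1))) + (k + 2) * k * S.card ^ (k - 2) :=
            Nat.add_le_add (Nat.add_le_add (Finset.card_image_le.trans hprod1)
              (Finset.card_image_le.trans hprod2)) (Finset.card_image_le.trans hprod3)
        _ ≤ (2 * ((k + 2) * k) * (S.card ^ (k - 1) * d ^ (2 * k - 2)) +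
            (k + 2) * k * (S.card ^ (k - 1) * d ^ (2 * k - 2))) +
            (k + 2) * k * (S.card ^ (k - 1) * d ^ (2 * k - 2)) :=
            Nat.add_le_add (Nat.add_le_add (Nat.mul_le_mul_left _ hA1)
              (Nat.mul_le_mul_left _ hA1)) (Nat.mul_le_mul_left _ hA2)
        _ = 4 * ((k + 2) * k) * (S.card ^ (k - 1) * d ^ (2 * k - 2)) := by ring

  have hEBB : ∃ E : Finset (Vert k d × Vert k d),
      (∀ α β : Vert k d, BBack k d S α β → (α, β) ∈ E) ∧
      E.card ≤ 4 * ((k + 2) * k) * (S.card ^ (k - 1) * d ^ (2 * k - 2)) := by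
    refine ⟨(((Finset.univ : Finset Bool) ×ˢ Finset.range (k + 2) ×ˢ TP k d S ×ˢ
          (Finset.univ : Finset (Fin (k - 1) → Fin d))).image
        (fun a => (Vert.node (Tag.B a.2.1) (maskB k d a.2.1 a.2.2.1) (fun _ => ⟨0, hd0⟩),
          Vert.node (if a.1 then Tag.L a.2.1 else Tag.L' a.2.1) a.2.2.1 a.2.2.2)))
      ∪ ((Finset.range (k + 2) ×ˢ TP k d S ×ˢ
          (Finset.univ : Finset (Fin (k - 1) → Fin d))).image
        (fun a => (Vert.node (Tag.L' (k - 2)) a.2.1 a.2.2,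
          Vert.node (Tag.B a.1) (maskB k d a.1 a.2.1) (fun _ => ⟨0, hd0⟩))))
      ∪ ((Finset.range (k + 2) ×ˢ TPB k d S).image
        (fun a => (Vert.node (Tag.B a.1) a.2 (fun _ => ⟨0, hd0⟩),
          Vert.node (Tag.B 3) (maskB k d 3 a.2) (fun _ => ⟨0, hd0⟩)))), ?_, ?_⟩
    · rintro α β (⟨i, t, p, x, p', x', hαB, hmem, rfl, rfl, hsuf⟩ |
        ⟨i, p, x, p', x', hαL', hβB, rfl, rfl, hsuf⟩ |
        ⟨i, p, x, p', x', hαB, hβB3, rfl, rfl, hlast⟩)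
      · obtain ⟨h3i, hik, hfB, hzB⟩ := setB_elim hαB
        have hmask : p = maskB k d i p' := eq_maskB hfB (fun j hj => hsuf j hj)
        rcases hmem with hL | hL'
        · obtain ⟨p₁, x₁, heq, -⟩ := setL_shape hL
          obtain ⟨rfl, -, -⟩ := node_inj heq
          have hpf := setL_elim_mid hL (by omega) (by omega)
          refine Finset.mem_union_left _ (Finset.mem_union_left _ (Finset.mem_image.2
            ⟨(true, i, p', x'), ?_, ?_⟩))
          · exact Finset.mem_product.2 ⟨Finset.mem_univ _,
              Finset.mem_product.2 ⟨Finset.mem_range.2 (show i < k + 2 by omega),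
                Finset.mem_product.2 ⟨mem_TP (by omega) (by omega) hpf, Finset.mem_univ _⟩⟩⟩
          · show (Vert.node (Tag.B i) (maskB k d i p') (fun _ => ⟨0, hd0⟩),
                Vert.node (Tag.L i) p' x')
              = (Vert.node (Tag.B i) p x, Vert.node (Tag.L i) p' x')
            rw [hmask, zeroX_eq hd0 hzB]
        · obtain ⟨p₁, x₁, heq, -⟩ := setL'_shape hL'
          obtain ⟨rfl, -, -⟩ := node_inj heq
          obtain ⟨-, -, hpf⟩ := setL'_elim hL'
          refine Finset.mem_union_left _ (Finset.mem_union_left _ (Finset.mem_image.2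
            ⟨(false, i, p', x'), ?_, ?_⟩))
          · exact Finset.mem_product.2 ⟨Finset.mem_univ _,
              Finset.mem_product.2 ⟨Finset.mem_range.2 (show i < k + 2 by omega),
                Finset.mem_product.2 ⟨mem_TP (by omega) (by omega) hpf, Finset.mem_univ _⟩⟩⟩
          · show (Vert.node (Tag.B i) (maskB k d i p') (fun _ => ⟨0, hd0⟩),
                Vert.node (Tag.L' i) p' x')
              = (Vert.node (Tag.B i) p x, Vert.node (Tag.L' i) p' x')
            rw [hmask, zeroX_eq hd0 hzB]
      · obtain ⟨-, -, hpf⟩ := setL'_elim hαL'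
        obtain ⟨h3i, hik, hfB, hzB⟩ := setB_elim hβB
        have hmask : p' = maskB k d i p := eq_maskB hfB (fun j hj => hsuf j hj)
        refine Finset.mem_union_left _ (Finset.mem_union_right _ (Finset.mem_image.2
          ⟨(i, p, x), ?_, ?_⟩))
        · exact Finset.mem_product.2 ⟨Finset.mem_range.2 (show i < k + 2 by omega),
            Finset.mem_product.2 ⟨mem_TP (by omega) (by omega) hpf, Finset.mem_univ _⟩⟩
        · show (Vert.node (Tag.L' (k - 2)) p x,
              Vert.node (Tag.B i) (maskB k d i p) (fun _ => ⟨0, hd0⟩))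
            = (Vert.node (Tag.L' (k - 2)) p x, Vert.node (Tag.B i) p' x')
          rw [hmask, zeroX_eq hd0 hzB]
      · obtain ⟨h3i, hik, hfB, hzB⟩ := setB_elim hαB
        obtain ⟨-, -, hfB3, hzB3⟩ := setB_elim hβB3
        have hmask : p' = maskB k d 3 p :=
          eq_maskB hfB3 (fun j hj => hlast j (by have := j.isLt; omega))
        refine Finset.mem_union_right _ (Finset.mem_image.2 ⟨(i, p), ?_, ?_⟩)
        · exact Finset.mem_product.2 ⟨Finset.mem_range.2 (show i < k + 2 by omega),
            mem_TPB (by omega) (by omega) hfB⟩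
        · show (Vert.node (Tag.B i) p (fun _ => ⟨0, hd0⟩),
              Vert.node (Tag.B 3) (maskB k d 3 p) (fun _ => ⟨0, hd0⟩))
            = (Vert.node (Tag.B i) p x, Vert.node (Tag.B 3) p' x')
          rw [hmask, zeroX_eq hd0 hzB, zeroX_eq hd0 hzB3]
    · refine (Finset.card_union_le _ _).trans (le_trans (Nat.add_le_add
        (Finset.card_union_le _ _) le_rfl) ?_)
      have hprod1 : ((Finset.univ : Finset Bool) ×ˢ Finset.range (k + 2) ×ˢ TP k d S ×ˢ
          (Finset.univ : Finset (Fin (k - 1) → Fin d))).card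
          ≤ 2 * ((k + 2) * k) * (S.card ^ (k - 2) * d ^ (k - 1)) := by
        rw [Finset.card_product, Finset.card_product, Finset.card_product,
          Finset.card_range, Finset.card_univ, Finset.card_univ, hxcard,
          Fintype.card_bool]
        calc 2 * ((k + 2) * ((TP k d S).card * d ^ (k - 1)))
            ≤ 2 * ((k + 2) * ((k * S.card ^ (k - 2)) * d ^ (k - 1))) :=
              Nat.mul_le_mul_left _ (Nat.mul_le_mul_left _
                (Nat.mul_le_mul_right _ (card_TP_le hk hn)))
          _ = 2 * ((k + 2) * k) * (S.card ^ (k - 2) * d ^ (k - 1)) := by ring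
      have hprod2 : (Finset.range (k + 2) ×ˢ TP k d S ×ˢ
          (Finset.univ : Finset (Fin (k - 1) → Fin d))).card
          ≤ (k + 2) * k * (S.card ^ (k - 2) * d ^ (k - 1)) := by
        rw [Finset.card_product, Finset.card_product, Finset.card_range,
          Finset.card_univ, hxcard]
        calc (k + 2) * ((TP k d S).card * d ^ (k - 1))
            ≤ (k + 2) * ((k * S.card ^ (k - 2)) * d ^ (k - 1)) :=
              Nat.mul_le_mul_left _ (Nat.mul_le_mul_right _ (card_TP_le hk hn))
          _ = (k + 2) * k * (S.card ^ (k - 2) * d ^ (k - 1)) := by ring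
      have hprod3 : (Finset.range (k + 2) ×ˢ TPB k d S).card
          ≤ (k + 2) * k * S.card ^ (k - 2) := by
        rw [Finset.card_product, Finset.card_range]
        calc (k + 2) * (TPB k d S).card
            ≤ (k + 2) * (k * S.card ^ (k - 2)) :=
              Nat.mul_le_mul_left _ (card_TPB_le hk hn)
          _ = (k + 2) * k * S.card ^ (k - 2) := by ring
      calc _ ≤ (2 * ((k + 2) * k) * (S.card ^ (k - 2) * d ^ (k - 1)) +
            (k + 2) * k * (S.card ^ (k - 2) * d ^ (k - 1))) + (k + 2) * k * S.card ^ (k - 2) :=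
            Nat.add_le_add (Nat.add_le_add (Finset.card_image_le.trans hprod1)
              (Finset.card_image_le.trans hprod2)) (Finset.card_image_le.trans hprod3)
        _ ≤ (2 * ((k + 2) * k) * (S.card ^ (k - 1) * d ^ (2 * k - 2)) +
            (k + 2) * k * (S.card ^ (k - 1) * d ^ (2 * k - 2))) +
            (k + 2) * k * (S.card ^ (k - 1) * d ^ (2 * k - 2)) :=
            Nat.add_le_add (Nat.add_le_add (Nat.mul_le_mul_left _ hA1)
              (Nat.mul_le_mul_left _ hA1)) (Nat.mul_le_mul_left _ hA2)
        _ = 4 * ((k + 2) * k) * (S.card ^ (k - 1) * d ^ (2 * k - 2)) := by ring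

  have hEBA : ∃ E : Finset (Vert k d × Vert k d),
      (∀ (i : ℕ) (α β : Vert k d), α ∈ setB k d S i → β ∈ setA k d S i → (α, β) ∈ E) ∧
      E.card ≤ k * S.card ^ (k - 2) := by
    refine ⟨(Finset.Ico 2 (k + 2)).biUnion (fun i =>
      (PFin k d S (bB k i) ×ˢ PFin k d S (bA k i)).image (fun a =>
        (Vert.node (Tag.B i) a.1 (fun _ => ⟨0, hd0⟩),
         Vert.node (Tag.A i) a.2 (fun _ => ⟨0, hd0⟩)))), ?_, ?_⟩
    · intro i α β hB hA
      obtain ⟨p1, x1, rfl, h3, h4⟩ := setB_shape hB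
      obtain ⟨p2, x2, rfl, h5, h6⟩ := setA_shape hA
      obtain ⟨-, -, hf1, hz1⟩ := setB_elim hB
      obtain ⟨-, -, hf2, hz2⟩ := setA_elim hA
      refine Finset.mem_biUnion.2 ⟨i, Finset.mem_Ico.2 ⟨by omega, by omega⟩,
        Finset.mem_image.2 ⟨(p1, p2), ?_, ?_⟩⟩
      · exact Finset.mem_product.2 ⟨mem_PFin hf1 (fun j => by simp [bB]),
          mem_PFin hf2 (fun j => by simp [bA])⟩
      · show (Vert.node (Tag.B i) p1 (fun _ => ⟨0, hd0⟩),
            Vert.node (Tag.A i) p2 (fun _ => ⟨0, hd0⟩))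
          = (Vert.node (Tag.B i) p1 x1, Vert.node (Tag.A i) p2 x2)
        rw [zeroX_eq hd0 hz1, zeroX_eq hd0 hz2]
    · refine Finset.card_biUnion_le.trans ?_
      have hterm : ∀ i ∈ Finset.Ico 2 (k + 2),
          ((PFin k d S (bB k i) ×ˢ PFin k d S (bA k i)).image (fun a =>
            ((Vert.node (Tag.B i) a.1 (fun _ => ⟨0, hd0⟩) : Vert k d),
             (Vert.node (Tag.A i) a.2 (fun _ => ⟨0, hd0⟩) : Vert k d)))).card
          ≤ S.card ^ (k - 2) := by
        intro i hi
        refine Finset.card_image_le.trans ?_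
        rw [Finset.card_product]
        exact card_pairBA_le hk hn (Finset.mem_Ico.1 hi).1
      refine (Finset.sum_le_sum hterm).trans ?_
      rw [Finset.sum_const, Nat.card_Ico, smul_eq_mul, Nat.add_sub_cancel]
  have hEFix : ∃ E : Finset (Vert k d × Vert k d),
      (∀ α β : Vert k d, FixedE k d S α β → (α, β) ∈ E) ∧
      E.card ≤ (4 * k + 2) * (S.card ^ (k - 1) * d ^ (k - 1)) := by
    refine ⟨((TP k d S ×ˢ (Finset.univ : Finset (Fin (k - 1) → Fin d))).image
        (fun a => ((Vert.node (Tag.L' (k - 2)) a.1 a.2 : Vert k d), Vert.vv)))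
      ∪ ((PFin k d S (bOne k)).image
        (fun p => ((Vert.vv : Vert k d), Vert.node (Tag.L 1) p (fun _ => ⟨0, hd0⟩))))
      ∪ ((TP k d S ×ˢ (Finset.univ : Finset (Fin (k - 1) → Fin d))).image
        (fun a => ((Vert.vv : Vert k d), Vert.node (Tag.L 2) a.1 a.2)))
      ∪ ((TP k d S ×ˢ (Finset.univ : Finset (Fin (k - 1) → Fin d))).image
        (fun a => ((Vert.node (Tag.L k) a.1 a.2 : Vert k d), Vert.uu)))
      ∪ ((PFin k d S (bTop k)).image
        (fun p => ((Vert.node (Tag.L (k + 1)) p (fun _ => ⟨0, hd0⟩) : Vert k d), Vert.uu)))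
      ∪ ((TP k d S ×ˢ (Finset.univ : Finset (Fin (k - 1) → Fin d))).image
        (fun a => ((Vert.uu : Vert k d), Vert.node (Tag.L' 4) a.1 a.2))), ?_, ?_⟩
    · rintro α β (⟨hαL', rfl⟩ | ⟨rfl, hβ | hβ⟩ | ⟨hα | hα, rfl⟩ | ⟨rfl, hβ⟩)
      · obtain ⟨p, x, rfl, -⟩ := setL'_shape hαL'
        obtain ⟨-, -, hpf⟩ := setL'_elim hαL'
        refine Finset.mem_union_left _ (Finset.mem_union_left _ (Finset.mem_union_left _
          (Finset.mem_union_left _ (Finset.mem_union_left _ (Finset.mem_image.2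
            ⟨(p, x), ?_, rfl⟩)))))
        exact Finset.mem_product.2 ⟨mem_TP (by omega) (by omega) hpf, Finset.mem_univ _⟩
      · obtain ⟨p, x, rfl, -⟩ := setL_shape hβ
        obtain ⟨hpf, hz⟩ := setL_one_elim hk hβ
        refine Finset.mem_union_left _ (Finset.mem_union_left _ (Finset.mem_union_left _
          (Finset.mem_union_left _ (Finset.mem_union_right _ (Finset.mem_image.2
            ⟨p, mem_PFin hpf (fun j => by simp [bOne]), ?_⟩)))))
        show ((Vert.vv : Vert k d), Vert.node (Tag.L 1) p (fun _ => ⟨0, hd0⟩))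
          = (Vert.vv, Vert.node (Tag.L 1) p x)
        rw [zeroX_eq hd0 hz]
      · obtain ⟨p, x, rfl, -⟩ := setL_shape hβ
        have hpf := setL_elim_mid hβ (by omega) (by omega)
        refine Finset.mem_union_left _ (Finset.mem_union_left _ (Finset.mem_union_left _
          (Finset.mem_union_right _ (Finset.mem_image.2 ⟨(p, x), ?_, rfl⟩))))
        exact Finset.mem_product.2 ⟨mem_TP (by omega) (by omega) hpf, Finset.mem_univ _⟩
      · obtain ⟨p, x, rfl, -⟩ := setL_shape hα
        have hpf := setL_elim_mid hα (by omega) (by omega)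
        refine Finset.mem_union_left _ (Finset.mem_union_left _ (Finset.mem_union_right _
          (Finset.mem_image.2 ⟨(p, x), ?_, rfl⟩)))
        exact Finset.mem_product.2 ⟨mem_TP (by omega) (by omega) hpf, Finset.mem_univ _⟩
      · obtain ⟨p, x, rfl, -⟩ := setL_shape hα
        obtain ⟨hpf, hz⟩ := setL_top_elim hk hα
        refine Finset.mem_union_left _ (Finset.mem_union_right _ (Finset.mem_image.2
          ⟨p, mem_PFin hpf (fun j => by simp [bTop]), ?_⟩))
        show ((Vert.node (Tag.L (k + 1)) p (fun _ => ⟨0, hd0⟩) : Vert k d), Vert.uu)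
          = (Vert.node (Tag.L (k + 1)) p x, Vert.uu)
        rw [zeroX_eq hd0 hz]
      · obtain ⟨p, x, rfl, -⟩ := setL'_shape hβ
        obtain ⟨-, -, hpf⟩ := setL'_elim hβ
        refine Finset.mem_union_right _ (Finset.mem_image.2 ⟨(p, x), ?_, rfl⟩)
        exact Finset.mem_product.2 ⟨mem_TP (by omega) (by omega) hpf, Finset.mem_univ _⟩
    · have hTPd : (TP k d S ×ˢ (Finset.univ : Finset (Fin (k - 1) → Fin d))).card
          ≤ k * (S.card ^ (k - 1) * d ^ (k - 1)) := by
        rw [Finset.card_product, Finset.card_univ, hxcard]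
        calc (TP k d S).card * d ^ (k - 1)
            ≤ (k * S.card ^ (k - 2)) * d ^ (k - 1) :=
              Nat.mul_le_mul_right _ (card_TP_le hk hn)
          _ ≤ (k * S.card ^ (k - 1)) * d ^ (k - 1) :=
              Nat.mul_le_mul_right _ (Nat.mul_le_mul_left _ hnk)
          _ = k * (S.card ^ (k - 1) * d ^ (k - 1)) := by ring
      have hone : (PFin k d S (bOne k)).card ≤ S.card ^ (k - 1) * d ^ (k - 1) :=
        (card_bOne_le hk hn).trans (Nat.le_mul_of_pos_right _ (pow_pos hd0 _))
      have htop : (PFin k d S (bTop k)).card ≤ S.card ^ (k - 1) * d ^ (k - 1) :=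
        (card_bTop_le hk hn).trans (Nat.le_mul_of_pos_right _ (pow_pos hd0 _))
      refine le_trans (Finset.card_union_le _ _) (le_trans (Nat.add_le_add
        (le_trans (Finset.card_union_le _ _) (Nat.add_le_add
          (le_trans (Finset.card_union_le _ _) (Nat.add_le_add
            (le_trans (Finset.card_union_le _ _) (Nat.add_le_add
              (le_trans (Finset.card_union_le _ _) (Nat.add_le_add
                (Finset.card_image_le.trans hTPd)
                (Finset.card_image_le.trans hone)))
              (Finset.card_image_le.trans hTPd)))
            (Finset.card_image_le.trans hTPd)))
          (Finset.card_image_le.trans htop)))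
        (Finset.card_image_le.trans hTPd)) ?_)
      calc k * (S.card ^ (k - 1) * d ^ (k - 1)) + S.card ^ (k - 1) * d ^ (k - 1) +
            k * (S.card ^ (k - 1) * d ^ (k - 1)) + k * (S.card ^ (k - 1) * d ^ (k - 1)) +
            S.card ^ (k - 1) * d ^ (k - 1) + k * (S.card ^ (k - 1) * d ^ (k - 1))
          = (4 * k + 2) * (S.card ^ (k - 1) * d ^ (k - 1)) := by ring
        _ ≤ (4 * k + 2) * (S.card ^ (k - 1) * d ^ (k - 1)) := le_rfl

  have claimA : ({ e : Vert k d × Vert k d | VecE k d S e.1 e.2 ∨ VecE k d S e.2 e.1 ∨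
      CoordE k d S e.1 e.2 }).ncard
      ≤ 100 * (k + 2) ^ 3 * (S.card ^ (k - 1) * d ^ (2 * k - 2)) := by
    obtain ⟨E1, hm1, hc1⟩ := hE1
    obtain ⟨E3, hm3, hc3⟩ := hE3
    have hc1' : E1.card ≤ 4 * ((k + 2) * k) * (S.card ^ (k - 1) * d ^ (2 * k - 2)) :=
      hc1.trans (Nat.mul_le_mul_left _ hA3)
    refine le_trans (ncard_le_card_of_mem (T := E1 ∪ E1.image Prod.swap ∪ E3) ?_) ?_
    · rintro ⟨α, β⟩ h
      rcases h with h | h | h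
      · exact Finset.mem_union_left _ (Finset.mem_union_left _ (hm1 α β h))
      · exact Finset.mem_union_left _ (Finset.mem_union_right _
          (Finset.mem_image.2 ⟨(β, α), hm1 β α h, rfl⟩))
      · exact Finset.mem_union_right _ (hm3 α β h)
    · refine le_trans (Finset.card_union_le _ _) (le_trans (Nat.add_le_add
        (le_trans (Finset.card_union_le _ _) (Nat.add_le_add hc1'
          (Finset.card_image_le.trans hc1'))) hc3) ?_)
      calc 4 * ((k + 2) * k) * (S.card ^ (k - 1) * d ^ (2 * k - 2)) +
            4 * ((k + 2) * k) * (S.card ^ (k - 1) * d ^ (2 * k - 2)) +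
            4 * ((k + 2) * k) * (S.card ^ (k - 1) * d ^ (2 * k - 2))
          = 12 * ((k + 2) * k) * (S.card ^ (k - 1) * d ^ (2 * k - 2)) := by ring
        _ ≤ 100 * (k + 2) ^ 3 * (S.card ^ (k - 1) * d ^ (2 * k - 2)) :=
            Nat.mul_le_mul_right _ (by linarith [hco])
  have claimB : ({ e : Vert k d × Vert k d | SwapE k d S e.1 e.2 ∨
      SwapE k d S e.2 e.1 }).ncard
      ≤ 100 * (k + 2) ^ 3 * (S.card ^ (k - 1) * d ^ (k - 1)) := by
    obtain ⟨E, hm, hc⟩ := hES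
    refine le_trans (ncard_le_card_of_mem (T := E ∪ E.image Prod.swap) ?_) ?_
    · rintro ⟨α, β⟩ (h | h)
      · exact Finset.mem_union_left _ (hm α β h)
      · exact Finset.mem_union_right _ (Finset.mem_image.2 ⟨(β, α), hm β α h, rfl⟩)
    · refine le_trans (Finset.card_union_le _ _) (le_trans (Nat.add_le_add hc
        (Finset.card_image_le.trans hc)) ?_)
      calc (2 * ((k + 2) * k) + 2) * (S.card ^ (k - 1) * d ^ (k - 1)) +
            (2 * ((k + 2) * k) + 2) * (S.card ^ (k - 1) * d ^ (k - 1))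
          = (4 * ((k + 2) * k) + 4) * (S.card ^ (k - 1) * d ^ (k - 1)) := by ring
        _ ≤ 100 * (k + 2) ^ 3 * (S.card ^ (k - 1) * d ^ (k - 1)) :=
            Nat.mul_le_mul_right _ (by linarith [hco, hco1])
  have claimD : ∀ i : ℕ, ({ e : Vert k d × Vert k d |
      e.1 ∈ setB k d S i ∧ e.2 ∈ setA k d S i }).ncard
      ≤ 100 * (k + 2) ^ 3 * S.card ^ (k - 2) := by
    obtain ⟨E, hm, hc⟩ := hEBA
    intro i
    refine le_trans (ncard_le_card_of_mem (fun e he => hm i e.1 e.2 he.1 he.2))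
      (hc.trans (Nat.mul_le_mul_right _ (by linarith [hco2])))
  have claimE : ∀ w ∈ VertexSet k d S, w ≠ Vert.uu → w ≠ Vert.vv →
      ({ z : Vert k d | FixedE k d S w z ∨ FixedE k d S z w }).ncard ≤ 2 := by
    intro w _ hwu hwv
    refine le_trans (ncard_le_card_of_mem (T := {Vert.uu, Vert.vv}) ?_) ?_
    · intro z hz
      rcases hz with h | h
      · rcases h with ⟨-, rfl⟩ | ⟨h1, -⟩ | ⟨-, rfl⟩ | ⟨h1, -⟩
        · exact Finset.mem_insert_of_mem (Finset.mem_singleton_self _)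
        · exact (hwv h1).elim
        · exact Finset.mem_insert_self _ _
        · exact (hwu h1).elim
      · rcases h with ⟨-, h1⟩ | ⟨rfl, -⟩ | ⟨-, h1⟩ | ⟨rfl, -⟩
        · exact (hwv h1).elim
        · exact Finset.mem_insert_of_mem (Finset.mem_singleton_self _)
        · exact (hwu h1).elim
        · exact Finset.mem_insert_self _ _
    · exact le_trans (Finset.card_insert_le _ _) (by simp)

  have claimC : ∀ w ∈ VertexSet k d S, w ∉ setAall k d S → w ∉ setBall k d S →
      ({ z : Vert k d | ABack k d S w z ∨ ABack k d S z w ∨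
          BBack k d S w z ∨ BBack k d S z w }).ncard ≤ 100 * (k + 2) ^ 3 * k := by
    intro w _ hwA hwB
    have hAcon : ∀ i, w ∈ setA k d S i → False :=
      fun i h => hwA (Set.mem_iUnion.2 ⟨i, h⟩)
    have hBcon : ∀ i, w ∈ setB k d S i → False :=
      fun i h => hwB (Set.mem_iUnion.2 ⟨i, h⟩)
    obtain ⟨t, p, x, rfl⟩ | rfl | rfl :
        (∃ t p x, w = Vert.node t p x) ∨ w = Vert.uu ∨ w = Vert.vv := by
      cases w with
      | node t p x => exact Or.inl ⟨t, p, x, rfl⟩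
      | uu => exact Or.inr (Or.inl rfl)
      | vv => exact Or.inr (Or.inr rfl)
    · refine le_trans (ncard_le_card_of_mem
        (T := (Finset.univ : Finset (Bool × Fin (k + 2))).image
          (fun c => if c.1 then
              Vert.node (Tag.A (c.2 : ℕ)) (maskA k d (c.2 : ℕ) p) (fun _ => ⟨0, hd0⟩)
            else
              Vert.node (Tag.B (c.2 : ℕ)) (maskB k d (c.2 : ℕ) p) (fun _ => ⟨0, hd0⟩)))
        ?_) ?_
      · intro z hz
        rcases hz with h | h | h | h
        · rcases h with ⟨i, t₁, p₁, x₁, p₂, x₂, hmem, hβA, heq, rfl, hpre⟩ |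
            ⟨i, p₁, x₁, p₂, x₂, hαA, -, -, -, -⟩ | ⟨i, p₁, x₁, p₂, x₂, hαA, -, -, -, -⟩
          · obtain ⟨-, hp₁, -⟩ := node_inj heq
            obtain ⟨h4, hik, hfA, hzA⟩ := setA_elim hβA
            have hmask : p₂ = maskA k d i p :=
              eq_maskA hfA (fun j hj => (hpre j hj).trans (congrFun hp₁ j).symm)
            refine Finset.mem_image.2 ⟨(true, ⟨i, by omega⟩), Finset.mem_univ _, ?_⟩
            show Vert.node (Tag.A i) (maskA k d i p) (fun _ => ⟨0, hd0⟩)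
              = Vert.node (Tag.A i) p₂ x₂
            rw [hmask, zeroX_eq hd0 hzA]
          · exact (hAcon i hαA).elim
          · exact (hAcon (k - 1) hαA).elim
        · rcases h with ⟨i, t₁, p₁, x₁, p₂, x₂, -, hβA, -, -, -⟩ |
            ⟨i, p₁, x₁, p₂, x₂, hαA, hβL4, rfl, heq, hpre⟩ |
            ⟨i, p₁, x₁, p₂, x₂, -, hβA, -, -, -⟩
          · exact (hAcon i hβA).elim
          · obtain ⟨-, hp₂, -⟩ := node_inj heq
            obtain ⟨h4, hik, hfA, hzA⟩ := setA_elim hαA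
            have hmask : p₁ = maskA k d i p :=
              eq_maskA hfA (fun j hj => (hpre j hj).symm.trans (congrFun hp₂ j).symm)
            refine Finset.mem_image.2 ⟨(true, ⟨i, by omega⟩), Finset.mem_univ _, ?_⟩
            show Vert.node (Tag.A i) (maskA k d i p) (fun _ => ⟨0, hd0⟩)
              = Vert.node (Tag.A i) p₁ x₁
            rw [hmask, zeroX_eq hd0 hzA]
          · exact (hAcon i hβA).elim
        · rcases h with ⟨i, t₁, p₁, x₁, p₂, x₂, hαB, -, -, -, -⟩ |
            ⟨i, p₁, x₁, p₂, x₂, hαL', hβB, heq, rfl, hsuf⟩ |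
            ⟨i, p₁, x₁, p₂, x₂, hαB, -, -, -, -⟩
          · exact (hBcon i hαB).elim
          · obtain ⟨-, hp₁, -⟩ := node_inj heq
            obtain ⟨h3, hik, hfB, hzB⟩ := setB_elim hβB
            have hmask : p₂ = maskB k d i p :=
              eq_maskB hfB (fun j hj => (hsuf j hj).trans (congrFun hp₁ j).symm)
            refine Finset.mem_image.2 ⟨(false, ⟨i, by omega⟩), Finset.mem_univ _, ?_⟩
            show Vert.node (Tag.B i) (maskB k d i p) (fun _ => ⟨0, hd0⟩)
              = Vert.node (Tag.B i) p₂ x₂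
            rw [hmask, zeroX_eq hd0 hzB]
          · exact (hBcon i hαB).elim
        · rcases h with ⟨i, t₁, p₁, x₁, p₂, x₂, hαB, hmem, rfl, heq, hsuf⟩ |
            ⟨i, p₁, x₁, p₂, x₂, -, hβB, -, -, -⟩ | ⟨i, p₁, x₁, p₂, x₂, -, hβB, -, -, -⟩
          · obtain ⟨-, hp₂, -⟩ := node_inj heq
            obtain ⟨h3, hik, hfB, hzB⟩ := setB_elim hαB
            have hmask : p₁ = maskB k d i p :=
              eq_maskB hfB (fun j hj => (hsuf j hj).trans (congrFun hp₂ j).symm)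
            refine Finset.mem_image.2 ⟨(false, ⟨i, by omega⟩), Finset.mem_univ _, ?_⟩
            show Vert.node (Tag.B i) (maskB k d i p) (fun _ => ⟨0, hd0⟩)
              = Vert.node (Tag.B i) p₁ x₁
            rw [hmask, zeroX_eq hd0 hzB]
          · exact (hBcon i hβB).elim
          · exact (hBcon 3 hβB).elim
      · refine Finset.card_image_le.trans ?_
        rw [Finset.card_univ, Fintype.card_prod, Fintype.card_bool, Fintype.card_fin]
        calc 2 * (k + 2) ≤ (k + 2) ^ 3 * k := by nlinarith
          _ ≤ 100 * (k + 2) ^ 3 * k := by nlinarith [Nat.mul_le_mul_right k hco1]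
    · refine le_trans (ncard_le_card_of_mem (T := (∅ : Finset (Vert k d))) ?_) (by simp)
      intro z hz
      exfalso
      rcases hz with h | h | h | h
      · obtain ⟨t, p, x, heq⟩ := aback_fst_node h
        cases heq
      · obtain ⟨t, p, x, heq⟩ := aback_snd_node h
        cases heq
      · obtain ⟨t, p, x, heq⟩ := bback_fst_node h
        cases heq
      · obtain ⟨t, p, x, heq⟩ := bback_snd_node h
        cases heq
    · refine le_trans (ncard_le_card_of_mem (T := (∅ : Finset (Vert k d))) ?_) (by simp)
      intro z hz
      exfalso
      rcases hz with h | h | h | h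
      · obtain ⟨t, p, x, heq⟩ := aback_fst_node h
        cases heq
      · obtain ⟨t, p, x, heq⟩ := aback_snd_node h
        cases heq
      · obtain ⟨t, p, x, heq⟩ := bback_fst_node h
        cases heq
      · obtain ⟨t, p, x, heq⟩ := bback_snd_node h
        cases heq

  have claimF : ({ e : Vert k d × Vert k d | Adj k d S e.1 e.2 }).ncard
      ≤ 100 * (k + 2) ^ 3 * (S.card ^ (k - 1) * d ^ (2 * k - 2)) := by
    obtain ⟨E1, hm1, hc1⟩ := hE1
    obtain ⟨E3, hm3, hc3⟩ := hE3
    obtain ⟨ES, hmS, hcS⟩ := hES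
    obtain ⟨EAB, hmAB, hcAB⟩ := hEAB
    obtain ⟨EBB, hmBB, hcBB⟩ := hEBB
    obtain ⟨EBA, hmBA, hcBA⟩ := hEBA
    obtain ⟨EF, hmF, hcF⟩ := hEFix
    have hcS' : ES.card ≤ (2 * ((k + 2) * k) + 2) * (S.card ^ (k - 1) * d ^ (2 * k - 2)) :=
      hcS.trans (Nat.mul_le_mul_left _ hA3)
    have hc1' : E1.card ≤ 4 * ((k + 2) * k) * (S.card ^ (k - 1) * d ^ (2 * k - 2)) :=
      hc1.trans (Nat.mul_le_mul_left _ hA3)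
    have hcBA' : EBA.card ≤ k * (S.card ^ (k - 1) * d ^ (2 * k - 2)) :=
      hcBA.trans (Nat.mul_le_mul_left _ hA2)
    have hcF' : EF.card ≤ (4 * k + 2) * (S.card ^ (k - 1) * d ^ (2 * k - 2)) :=
      hcF.trans (Nat.mul_le_mul_left _ hA3)
    refine le_trans (ncard_le_card_of_mem
      (T := ES ∪ (ES.image Prod.swap ∪ (E1 ∪ (E1.image Prod.swap ∪
        (E3 ∪ (EAB ∪ (EBB ∪ (EBA ∪ EF)))))))) ?_) ?_
    · rintro ⟨α, β⟩ h
      rcases h with h | h | h | h | h | h | h | h | h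
      · exact Finset.mem_union_left _ (hmS α β h)
      · exact Finset.mem_union_right _ (Finset.mem_union_left _
          (Finset.mem_image.2 ⟨(β, α), hmS β α h, rfl⟩))
      · exact Finset.mem_union_right _ (Finset.mem_union_right _
          (Finset.mem_union_left _ (hm1 α β h)))
      · exact Finset.mem_union_right _ (Finset.mem_union_right _
          (Finset.mem_union_right _ (Finset.mem_union_left _
            (Finset.mem_image.2 ⟨(β, α), hm1 β α h, rfl⟩))))
      · exact Finset.mem_union_right _ (Finset.mem_union_right _
          (Finset.mem_union_right _ (Finset.mem_union_right _
            (Finset.mem_union_left _ (hm3 α β h)))))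
      · exact Finset.mem_union_right _ (Finset.mem_union_right _
          (Finset.mem_union_right _ (Finset.mem_union_right _
            (Finset.mem_union_right _ (Finset.mem_union_left _ (hmAB α β h))))))
      · exact Finset.mem_union_right _ (Finset.mem_union_right _
          (Finset.mem_union_right _ (Finset.mem_union_right _
            (Finset.mem_union_right _ (Finset.mem_union_right _
              (Finset.mem_union_left _ (hmBB α β h)))))))
      · obtain ⟨i, -, -, hB, hA⟩ := h
        exact Finset.mem_union_right _ (Finset.mem_union_right _
          (Finset.mem_union_right _ (Finset.mem_union_right _
            (Finset.mem_union_right _ (Finset.mem_union_right _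
              (Finset.mem_union_right _ (Finset.mem_union_left _ (hmBA i α β hB hA))))))))
      · exact Finset.mem_union_right _ (Finset.mem_union_right _
          (Finset.mem_union_right _ (Finset.mem_union_right _
            (Finset.mem_union_right _ (Finset.mem_union_right _
              (Finset.mem_union_right _ (Finset.mem_union_right _ (hmF α β h))))))))
    · refine le_trans (Finset.card_union_le _ _) (le_trans (Nat.add_le_add hcS'
        (le_trans (Finset.card_union_le _ _) (Nat.add_le_add
          (Finset.card_image_le.trans hcS')
          (le_trans (Finset.card_union_le _ _) (Nat.add_le_add hc1'
            (le_trans (Finset.card_union_le _ _) (Nat.add_le_add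
              (Finset.card_image_le.trans hc1')
              (le_trans (Finset.card_union_le _ _) (Nat.add_le_add hc3
                (le_trans (Finset.card_union_le _ _) (Nat.add_le_add hcAB
                  (le_trans (Finset.card_union_le _ _) (Nat.add_le_add hcBB
                    (le_trans (Finset.card_union_le _ _)
                      (Nat.add_le_add hcBA' hcF'))))))))))))))) ?_)
      calc (2 * ((k + 2) * k) + 2) * (S.card ^ (k - 1) * d ^ (2 * k - 2)) +
            ((2 * ((k + 2) * k) + 2) * (S.card ^ (k - 1) * d ^ (2 * k - 2)) +
            (4 * ((k + 2) * k) * (S.card ^ (k - 1) * d ^ (2 * k - 2)) +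
            (4 * ((k + 2) * k) * (S.card ^ (k - 1) * d ^ (2 * k - 2)) +
            (4 * ((k + 2) * k) * (S.card ^ (k - 1) * d ^ (2 * k - 2)) +
            (4 * ((k + 2) * k) * (S.card ^ (k - 1) * d ^ (2 * k - 2)) +
            (4 * ((k + 2) * k) * (S.card ^ (k - 1) * d ^ (2 * k - 2)) +
            (k * (S.card ^ (k - 1) * d ^ (2 * k - 2)) +
            (4 * k + 2) * (S.card ^ (k - 1) * d ^ (2 * k - 2)))))))))
          = (24 * ((k + 2) * k) + 5 * k + 6) * (S.card ^ (k - 1) * d ^ (2 * k - 2)) := by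
            ring
        _ ≤ 100 * (k + 2) ^ 3 * (S.card ^ (k - 1) * d ^ (2 * k - 2)) :=
            Nat.mul_le_mul_right _ (by linarith [hco, hco1, hco2])
  exact ⟨claimA, claimB, claimC, claimD, claimE, claimF⟩


end DiamLB
end

section
/- (Section 4.2, Case 1) Assume S is a NO instance of k-OV: every k vectors v_1,…,v_k ∈ S (repetitions allowed) have a common coordinate x ∈ [d] with v_1[x] = ⋯ = v_k[x] = 1. Then for every vertex α ∈ L_1 ∪ L_2 and every vertex β ∈ (L ∪ L') \ (L_1 ∪ L_2), we have d(α,β) ≤ k. -/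
namespace DiamLB

lemma hasWalkLen_snoc {V : Type*} {Adj : V → V → Prop} :
    ∀ {n : ℕ} {a b c : V}, HasWalkLen Adj n a b → Adj b c → HasWalkLen Adj (n + 1) a c := by
  intro n
  induction n with
  | zero =>
    intro a b c h h'
    have h2 : a = b := h
    subst h2
    exact ⟨c, h', rfl⟩
  | succ n ih =>
    rintro a b c ⟨e, hae, hw⟩ h'
    exact ⟨e, hae, ih hw h'⟩

/-- **Section 4.2, Case 1.**  Assume `S` is a NO instance of `k`-OV:
every `k` vectors of `S` (repetitions allowed) have a common coordinate at which they
all equal `1`.  Then for every vertex `α ∈ L_1 ∪ L_2` and every vertex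
`β ∈ (L ∪ L') \ (L_1 ∪ L_2)`, we have `d(α,β) ≤ k`. -/
theorem case1_no_instance (k d : ℕ) (hk : 5 ≤ k) (hd : 1 ≤ d)
    (S : Finset (Vec d)) (hone : ones d ∈ S)
    (hno : ∀ f : Fin k → Vec d, (∀ j, f j ∈ S) → ∃ x : Fin d, ∀ j, f j x = true)
    (α : Vert k d) (hα : α ∈ setL k d S 1 ∨ α ∈ setL k d S 2)
    (β : Vert k d) (hβ : β ∈ setLall k d S ∪ setL'all k d S)
    (hβ1 : β ∉ setL k d S 1) (hβ2 : β ∉ setL k d S 2) :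
    DistLE (Adj k d S) α β k := by
  classical
  -- extract α
  obtain ⟨iα, pα, xα, hαeq, hiα12, hαfill, hαmem⟩ :
      ∃ iα pα xα, α = Vert.node (Tag.L iα) pα xα ∧ (iα = 1 ∨ iα = 2) ∧
        FillsS k d S (fun j => j < k - iα) pα ∧ α ∈ setL k d S iα := by
    rcases hα with h | h
    · obtain ⟨p, x, heq, hdis⟩ := id h
      rcases hdis with ⟨_, hfill, _⟩ | ⟨habs, _⟩ | ⟨habs, _⟩
      · exact ⟨1, p, x, heq, Or.inl rfl, hfill, h⟩
      · exact absurd habs (by omega)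
      · exact absurd habs (by omega)
    · obtain ⟨p, x, heq, hdis⟩ := id h
      rcases hdis with ⟨habs, _⟩ | ⟨habs, _⟩ | ⟨_, _, hfill, _⟩
      · exact absurd habs (by omega)
      · exact absurd habs (by omega)
      · refine ⟨2, p, x, heq, Or.inr rfl, fun j => ⟨fun hj => (hfill j).1 (Or.inl hj),
          fun hj => (hfill j).2 ?_⟩, h⟩
        have hjk := j.isLt
        rintro (h' | h')
        · exact hj h'
        · omega
  -- extract β
  obtain ⟨pβ, hβS, hβcase⟩ :
      ∃ pβ : Fin k → Option (Vec d),
        (∀ j, pβ j = none ∨ ∃ a ∈ S, pβ j = some a) ∧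
        ((∃ xβ, β = Vert.node (Tag.L (k+1)) pβ xβ ∧ β ∈ setL k d S (k+1) ∧
            FillsS k d S (fun j => 1 ≤ j) pβ) ∨
         (∃ i tβ xβ, 3 ≤ i ∧ i ≤ k - 1 ∧ β = Vert.node tβ pβ xβ ∧
            (β ∈ setL k d S i ∨ β ∈ setL' k d S i) ∧
            FillsS k d S (fun j => j < k - i ∨ k - i + 2 ≤ j) pβ) ∨
         (∃ xβ, β = Vert.node (Tag.L k) pβ xβ ∧ β ∈ setL k d S k ∧
            FillsS k d S (fun j => j < k - k ∨ k - k + 2 ≤ j) pβ)) := by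
    have fillopt : ∀ (F : ℕ → Prop) (p : Fin k → Option (Vec d)), FillsS k d S F p →
        ∀ j, p j = none ∨ ∃ a ∈ S, p j = some a := by
      intro F p hF j
      by_cases h : F (j : ℕ)
      · exact Or.inr ((hF j).1 h)
      · exact Or.inl ((hF j).2 h)
    rcases hβ with h | h
    · simp only [setLall, Set.mem_iUnion] at h
      obtain ⟨i, hLi⟩ := h
      obtain ⟨p, x, heq, hdis⟩ := hLi
      rcases hdis with ⟨hi1, hfill, hz⟩ | ⟨hi1, hfill, hz⟩ | ⟨h2, hik, hfill, hbitβ⟩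
      · subst hi1
        exact absurd ⟨p, x, heq, Or.inl ⟨rfl, hfill, hz⟩⟩ hβ1
      · subst hi1
        exact ⟨p, fillopt _ _ hfill, Or.inl ⟨x, heq,
          ⟨p, x, heq, Or.inr (Or.inl ⟨rfl, hfill, hz⟩)⟩, hfill⟩⟩
      · have hmemβ : β ∈ setL k d S i := ⟨p, x, heq, Or.inr (Or.inr ⟨h2, hik, hfill, hbitβ⟩)⟩
        have h3 : i = 2 ∨ 3 ≤ i := by omega
        rcases h3 with rfl | h3
        · exact absurd hmemβ hβ2
        · have h4 : i ≤ k - 1 ∨ i = k := by omega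
          rcases h4 with h4 | rfl
          · exact ⟨p, fillopt _ _ hfill, Or.inr (Or.inl ⟨i, Tag.L i, x, h3, h4, heq,
              Or.inl hmemβ, hfill⟩)⟩
          · exact ⟨p, fillopt _ _ hfill, Or.inr (Or.inr ⟨x, heq, hmemβ, hfill⟩)⟩
    · simp only [setL'all, Set.mem_iUnion] at h
      obtain ⟨i, hLi⟩ := h
      obtain ⟨p, x, heq, h3, h4, hfill⟩ := hLi
      exact ⟨p, fillopt _ _ hfill, Or.inr (Or.inl ⟨i, Tag.L' i, x, h3, h4, heq,
        Or.inr ⟨p, x, heq, h3, h4, hfill⟩, hfill⟩)⟩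
  -- the two vector families
  obtain ⟨q, hqS, hqβ⟩ : ∃ q : Fin k → Vec d, (∀ j, q j ∈ S) ∧
      (∀ j w, pβ j = some w → q j = w) := by
    refine ⟨fun j => (pβ j).getD (ones d), fun j => ?_, fun j w h => by simp [h]⟩
    rcases hβS j with h | ⟨a, ha, h⟩
    · simp [h, hone]
    · simp [h, ha]
  obtain ⟨avec, havS, havα⟩ : ∃ av : Fin k → Vec d, (∀ j, av j ∈ S) ∧
      (∀ j w, pα j = some w → av j = w) := by
    refine ⟨fun j => (pα j).getD (ones d), fun j => ?_, fun j w h => by simp [h]⟩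
    by_cases h : (j : ℕ) < k - iα
    · obtain ⟨a, ha, h2⟩ := (hαfill j).1 h
      simp [h2, ha]
    · simp [(hαfill j).2 h, hone]
  -- the coordinate array
  obtain ⟨xx, hxa, hxb⟩ : ∃ xx : Fin (k-1) → Fin d,
      (∀ (ℓ : Fin (k-1)) (j : Fin k), (j:ℕ) < k - 1 - (ℓ:ℕ) → avec j (xx ℓ) = true) ∧
      (∀ (ℓ : Fin (k-1)) (j : Fin k), ¬ (j:ℕ) < k - 1 - (ℓ:ℕ) → q j (xx ℓ) = true) := by
    have hex : ∀ ℓ : Fin (k-1), ∃ x : Fin d,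
        ∀ j : Fin k, (if (j:ℕ) < k - 1 - (ℓ:ℕ) then avec j else q j) x = true := by
      intro ℓ
      refine hno _ (fun j => ?_)
      by_cases h : (j:ℕ) < k - 1 - (ℓ:ℕ) <;> simp [h, havS, hqS]
    refine ⟨fun ℓ => (hex ℓ).choose, fun ℓ j hj => ?_, fun ℓ j hj => ?_⟩
    · have := (hex ℓ).choose_spec j; rwa [if_pos hj] at this
    · have := (hex ℓ).choose_spec j; rwa [if_neg hj] at this
  -- the path tuples
  obtain ⟨P, hPdef⟩ : ∃ P : ℕ → Fin k → Option (Vec d), ∀ i (j : Fin k),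
      P i j = if (j:ℕ) < k - i then some (avec j)
        else if k - i + 2 ≤ (j:ℕ) then some (q j) else none :=
    ⟨_, fun _ _ => rfl⟩
  have hfillP : ∀ i : ℕ, FillsS k d S (fun j => j < k - i ∨ k - i + 2 ≤ j) (P i) := by
    intro i j
    constructor
    · rintro (h | h)
      · exact ⟨avec j, havS j, by rw [hPdef, if_pos h]⟩
      · exact ⟨q j, hqS j, by rw [hPdef, if_neg (by omega), if_pos h]⟩
    · intro h
      rw [hPdef, if_neg (fun hh => h (Or.inl hh)), if_neg (fun hh => h (Or.inr hh))]
  have hbit : ∀ i : ℕ, 2 ≤ i → BitCond k d i (P i) xx := by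
    intro i hi
    constructor
    · intro j hj w hw ℓ hℓ
      rw [hPdef, if_pos hj] at hw
      obtain rfl := Option.some.inj hw
      exact hxa ℓ j (by omega)
    · intro j hj w hw ℓ hℓ
      rw [hPdef, if_neg (by omega), if_pos hj] at hw
      obtain rfl := Option.some.inj hw
      exact hxb ℓ j (by omega)
  have hmem : ∀ i : ℕ, 2 ≤ i → i ≤ k →
      Vert.node (Tag.L i) (P i) xx ∈ setL k d S i := by
    intro i h2 hik
    exact ⟨P i, xx, rfl, Or.inr (Or.inr ⟨h2, hik, hfillP i, hbit i h2⟩)⟩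
  have hswap : ∀ m : ℕ, 2 ≤ m → m ≤ k - 1 →
      Adj k d S (Vert.node (Tag.L m) (P m) xx) (Vert.node (Tag.L (m+1)) (P (m+1)) xx) := by
    intro m h2 hm
    refine Or.inl (Or.inl ⟨m, P m, xx, P (m+1), xx, h2, hm, rfl, rfl,
      hmem m h2 (by omega), hmem (m+1) (by omega) (by omega), rfl, ?_⟩)
    intro j hj1 hj2
    have hjk := j.isLt
    rw [hPdef, hPdef]
    split_ifs <;> first | rfl | omega
  have chain : ∀ m : ℕ, 2 ≤ m → m ≤ k →
      HasWalkLen (Adj k d S) (m - 2) (Vert.node (Tag.L 2) (P 2) xx)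
        (Vert.node (Tag.L m) (P m) xx) := by
    intro m hm
    induction m, hm using Nat.le_induction with
    | base => intro _; rfl
    | succ m hm ih =>
      intro hmk
      have hw := ih (by omega)
      have hedge := hswap m hm (by omega)
      have := hasWalkLen_snoc hw hedge
      rw [show m + 1 - 2 = (m - 2) + 1 by omega]
      exact this
  -- the middle part: from the layer-2 vertex to β, within k-1 steps
  have hmid : DistLE (Adj k d S) (Vert.node (Tag.L 2) (P 2) xx) β (k - 1) := by
    rcases hβcase with ⟨xβ, hβeq, hβmem, hβfill⟩ | ⟨i, tβ, xβ, h3i, hik1, hβeq, hβLL, hβfill⟩ |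
      ⟨xβ, hβeq, hβmem, hβfill⟩
    · -- β ∈ L_{k+1}
      have hedge : Adj k d S (Vert.node (Tag.L k) (P k) xx) β := by
        refine Or.inr (Or.inl (Or.inr (Or.inr ⟨pβ, xβ, P k, xx, hβeq, rfl, hβmem,
          hmem k (by omega) le_rfl, ?_⟩)))
        intro j hj
        have hjk := j.isLt
        rw [hPdef]
        by_cases h2 : 2 ≤ (j : ℕ)
        · obtain ⟨a, ha, hpa⟩ := (hβfill j).1 (by omega : 1 ≤ (j : ℕ))
          rw [if_neg (by omega), if_pos (by omega), hqβ j a hpa, hpa]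
        · rw [if_neg (by omega), if_neg (by omega), ((hβfill j).2 (by omega)).symm]
      exact ⟨(k - 2) + 1, by omega,
        hasWalkLen_snoc (chain k (by omega) le_rfl) hedge⟩
    · -- β ∈ L_i ∪ L'_i, 3 ≤ i ≤ k-1
      have h2 : i ≤ k - 2 ∨ i = k - 1 := by omega
      rcases h2 with hik2 | rfl
      · -- B-route
        obtain ⟨pb, hpbdef⟩ : ∃ pb : Fin k → Option (Vec d), ∀ j : Fin k,
            pb j = if k - i + 2 ≤ (j : ℕ) then pβ j else none := ⟨_, fun _ => rfl⟩
        obtain ⟨x0, hx0⟩ : ∃ x0 : Fin (k-1) → Fin d, ∀ ℓ, ((x0 ℓ : ℕ)) = 0 :=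
          ⟨fun _ => ⟨0, hd⟩, fun _ => rfl⟩
        have hWmem : Vert.node (Tag.L' (k-2)) (P (k-2)) xx ∈ setL' k d S (k-2) :=
          ⟨P (k-2), xx, rfl, by omega, by omega, hfillP (k-2)⟩
        have hbbmem : Vert.node (Tag.B i) pb x0 ∈ setB k d S i := by
          refine ⟨pb, x0, rfl, h3i, hik2, fun j => ⟨fun hj => ?_,
            fun hj => by rw [hpbdef, if_neg hj]⟩, hx0⟩
          obtain ⟨a, ha, hpa⟩ := (hβfill j).1 (Or.inr hj)
          exact ⟨a, ha, by rw [hpbdef, if_pos hj, hpa]⟩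
        have e1 : Adj k d S (Vert.node (Tag.L (k-2)) (P (k-2)) xx)
            (Vert.node (Tag.L' (k-2)) (P (k-2)) xx) := by
          refine Or.inr (Or.inr (Or.inr (Or.inr (Or.inl ⟨Tag.L (k-2), Tag.L' (k-2),
            P (k-2), xx, xx, rfl, rfl, ?_, Or.inr (Or.inr (Or.inl ⟨k-2,
            hmem (k-2) (by omega) (by omega), hWmem⟩))⟩))))
          intro hcontra
          simp only [Vert.node.injEq] at hcontra
          exact absurd hcontra.1 (by simp)
        have e2 : Adj k d S (Vert.node (Tag.L' (k-2)) (P (k-2)) xx)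
            (Vert.node (Tag.B i) pb x0) := by
          have hBB : BBack k d S (Vert.node (Tag.L' (k-2)) (P (k-2)) xx)
              (Vert.node (Tag.B i) pb x0) := by
            refine Or.inr (Or.inl ⟨i, P (k-2), xx, pb, x0, hWmem, hbbmem, rfl, rfl, ?_⟩)
            intro j hj
            have hjk := j.isLt
            obtain ⟨a, ha, hpa⟩ := (hβfill j).1 (Or.inr hj)
            rw [hpbdef, if_pos hj, hpa, hPdef, if_neg (by omega), if_pos (by omega),
              hqβ j a hpa]
          exact Or.inr (Or.inr (Or.inr (Or.inr (Or.inr (Or.inr (Or.inl hBB))))))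
        have e3 : Adj k d S (Vert.node (Tag.B i) pb x0) β := by
          have hBB : BBack k d S (Vert.node (Tag.B i) pb x0) β := by
            refine Or.inl ⟨i, tβ, pb, x0, pβ, xβ, hbbmem, hβLL, rfl, hβeq, ?_⟩
            intro j hj
            rw [hpbdef, if_pos hj]
          exact Or.inr (Or.inr (Or.inr (Or.inr (Or.inr (Or.inr (Or.inl hBB))))))
        exact ⟨(k-2-2) + 1 + 1 + 1, by omega, hasWalkLen_snoc (hasWalkLen_snoc
          (hasWalkLen_snoc (chain (k-2) (by omega) (by omega)) e1) e2) e3⟩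
      · -- i = k-1
        have hG1mem : Vert.node (Tag.L' (k-1)) pβ xx ∈ setL' k d S (k-1) :=
          ⟨pβ, xx, rfl, h3i, le_rfl, hβfill⟩
        have e1 : Adj k d S (Vert.node (Tag.L (k-1)) (P (k-1)) xx)
            (Vert.node (Tag.L' (k-1)) pβ xx) := by
          refine Or.inr (Or.inr (Or.inl ⟨k-1, P (k-1), xx, pβ, xx, h3i, le_rfl, rfl, rfl,
            hmem (k-1) (by omega) (by omega), hG1mem, rfl, Or.inl ?_⟩))
          intro j hj
          have hjk := j.isLt
          by_cases h2 : k - (k-1) + 2 ≤ (j : ℕ)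
          · obtain ⟨a, ha, hpa⟩ := (hβfill j).1 (Or.inr h2)
            rw [hpa, hPdef, if_neg (by omega), if_pos h2, hqβ j a hpa]
          · rw [(hβfill j).2 (by rintro (h' | h') <;> omega), hPdef, if_neg (by omega),
              if_neg h2]
        by_cases hG : Vert.node (Tag.L' (k-1)) pβ xx = β
        · exact ⟨(k-1-2) + 1, by omega,
            hasWalkLen_snoc (chain (k-1) (by omega) (by omega)) (hG ▸ e1)⟩
        · have e2 : Adj k d S (Vert.node (Tag.L' (k-1)) pβ xx) β := by
            refine Or.inr (Or.inr (Or.inr (Or.inr (Or.inl ⟨Tag.L' (k-1), tβ, pβ, xx, xβ,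
              rfl, hβeq, hG, ?_⟩))))
            rcases hβLL with hL | hL'
            · exact Or.inr (Or.inl ⟨k-1, hG1mem, hL⟩)
            · exact Or.inl ⟨k-1, hG1mem, hL'⟩
          exact ⟨(k-1-2) + 1 + 1, by omega, hasWalkLen_snoc (hasWalkLen_snoc
            (chain (k-1) (by omega) (by omega)) e1) e2⟩
    · -- β ∈ L_k
      have hPk : P k = pβ := by
        funext j
        have hjk := j.isLt
        rw [hPdef]
        by_cases h2 : 2 ≤ (j : ℕ)
        · obtain ⟨a, ha, hpa⟩ := (hβfill j).1 (Or.inr (by omega))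
          rw [if_neg (by omega), if_pos (by omega), hqβ j a hpa, hpa]
        · rw [if_neg (by omega), if_neg (by omega),
            ((hβfill j).2 (by rintro (h' | h') <;> omega)).symm]
      by_cases hG : Vert.node (Tag.L k) (P k) xx = β
      · exact ⟨k - 2, by omega, by rw [← hG]; exact chain k (by omega) le_rfl⟩
      · have e1 : Adj k d S (Vert.node (Tag.L k) (P k) xx) β := by
          refine Or.inr (Or.inr (Or.inr (Or.inr (Or.inl ⟨Tag.L k, Tag.L k, pβ, xx, xβ,
            by rw [hPk], hβeq, hG, Or.inr (Or.inr (Or.inr (Or.inr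
            ⟨hmem k (by omega) le_rfl, hβmem⟩)))⟩))))
        exact ⟨(k - 2) + 1, by omega,
          hasWalkLen_snoc (chain k (by omega) le_rfl) e1⟩
  -- the start step
  obtain ⟨n, hn, hw⟩ := hmid
  rcases hiα12 with rfl | rfl
  · -- α ∈ L₁
    have hedge : Adj k d S α (Vert.node (Tag.L 2) (P 2) xx) := by
      refine Or.inl (Or.inr (Or.inl ⟨pα, xα, P 2, xx, hαeq, rfl, hαmem,
        hmem 2 (by omega) (by omega), ?_⟩))
      intro j hj
      have hjk := j.isLt
      rw [hPdef]
      by_cases h1 : (j : ℕ) < k - 2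
      · obtain ⟨a, ha, h2⟩ := (hαfill j).1 (by omega : (j : ℕ) < k - 1)
        rw [if_pos h1, havα j a h2, h2]
      · rw [if_neg h1, if_neg (by omega), ((hαfill j).2 (by omega)).symm]
    exact ⟨n + 1, by omega, _, hedge, hw⟩
  · -- α ∈ L₂
    have hP2fun : P 2 = pα := by
      funext j
      have hjk := j.isLt
      rw [hPdef]
      by_cases h1 : (j : ℕ) < k - 2
      · obtain ⟨a, ha, h2⟩ := (hαfill j).1 h1
        rw [if_pos h1, havα j a h2, h2]
      · rw [if_neg h1, if_neg (by omega), ((hαfill j).2 h1).symm]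
    by_cases hax : xα = xx
    · have : α = Vert.node (Tag.L 2) (P 2) xx := by rw [hαeq, hP2fun, hax]
      exact ⟨n, by omega, this ▸ hw⟩
    · have hedge : Adj k d S α (Vert.node (Tag.L 2) (P 2) xx) := by
        refine Or.inr (Or.inr (Or.inr (Or.inr (Or.inl ⟨Tag.L 2, Tag.L 2, pα, xα, xx,
          hαeq, by rw [hP2fun], ?_, Or.inr (Or.inr (Or.inr (Or.inl ⟨hαmem,
            hmem 2 (by omega) (by omega)⟩)))⟩))))
        rw [hαeq]
        intro hcontra
        rw [hP2fun] at hcontra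
        simp only [Vert.node.injEq] at hcontra
        exact hax hcontra.2.2
      exact ⟨n + 1, by omega, _, hedge, hw⟩


end DiamLB
end

section
/- (Section 4.2, Case 3) Assume S is a NO instance of k-OV: every k vectors v_1,…,v_k ∈ S (repetitions allowed) have a common coordinate x ∈ [d] with v_1[x] = ⋯ = v_k[x] = 1. Then for all vertices α, β ∈ L_3 ∪ ⋯ ∪ L_{k-1} ∪ L'_3 ∪ ⋯ ∪ L'_{k-1}, we have d(α,β) ≤ k. -/
namespace DiamLB

/-!
Let `α` lie at level `i` and `β` at level `i'`, let `A` be the vectors of `α` and `B` those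
of `β`, empty slots being filled with the all-ones vector. Because `S` is a NO instance,
for every `ℓ` the `k` vectors `A_1, …, A_{k-ℓ}, B_{k-ℓ+1}, …, B_k` have a common
1-coordinate `x_ℓ`. For this coordinate array `x`, every tuple
`(A_1, …, A_{k-m}, B_{k-m+3}, …, B_k)` together with `x` is a vertex `P_m` of `L_m`, and
`P_2, P_3, …, P_k` is a path of swap edges. A walk from `α` to `β` enters this path at
`P_3` (a vector change and a coordinate change) or, when `i ≥ 4`, at `P_4` (through `A_i`
and `L'_4`), climbs it, and leaves it at `P_{k-1}` (a vector change and a coordinate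
change) or at `P_{k-2}` (through `L'_{k-2}` and `B_{i'}`); the lengths add up to `k`.
The one pair of levels this misses is `k = 5`, `i = 4`, `i' = 3`, where the walk swaps
down from `L_4` to `L_3` instead.
-/

section Walks

variable {V : Type*} {R : V → V → Prop} {a b c : V} {m n : ℕ}

theorem HasWalkLen.single (h : R a b) : HasWalkLen R 1 a b := ⟨b, h, rfl⟩

theorem HasWalkLen.append (h : HasWalkLen R m a b) (h' : HasWalkLen R n b c) :
    HasWalkLen R (m + n) a c := by
  induction m generalizing a with
  | zero => cases (h : a = b); simpa using h'
  | succ m ih =>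
    obtain ⟨e, hae, hw⟩ := h
    rw [Nat.succ_add]
    exact ⟨e, hae, ih hw⟩

theorem HasWalkLen.distLE (w : HasWalkLen R n a b) (h : n ≤ m) : DistLE R a b m :=
  ⟨n, h, w⟩

theorem DistLE.mono (h : DistLE R a b m) (hmn : m ≤ n) : DistLE R a b n :=
  let ⟨_, hl, w⟩ := h
  w.distLE (hl.trans hmn)

theorem DistLE.trans (h : DistLE R a b m) (h' : DistLE R b c n) : DistLE R a c (m + n) :=
  let ⟨_, hl, w⟩ := h
  let ⟨_, hl', w'⟩ := h'
  (w.append w').distLE (Nat.add_le_add hl hl')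

theorem distLE_one_of_ne_imp (h : a ≠ b → R a b) : DistLE R a b 1 := by
  by_cases hab : a = b
  · exact ⟨0, zero_le_one, hab⟩
  · exact (HasWalkLen.single (h hab)).distLE le_rfl

end Walks

section Edges

variable {k d : ℕ} {S : Finset (Vec d)} {α β : Vert k d}

theorem adj_of_swapE (h : SwapE k d S α β) : Adj k d S α β := Or.inl h

theorem adj_of_swapE_symm (h : SwapE k d S β α) : Adj k d S α β := Or.inr (Or.inl h)

theorem adj_of_vecE (h : VecE k d S α β) : Adj k d S α β := Or.inr (Or.inr (Or.inl h))

theorem adj_of_vecE_symm (h : VecE k d S β α) : Adj k d S α β :=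
  Or.inr (Or.inr (Or.inr (Or.inl h)))

theorem adj_of_coordE (h : CoordE k d S α β) : Adj k d S α β :=
  Or.inr (Or.inr (Or.inr (Or.inr (Or.inl h))))

theorem adj_of_aBack (h : ABack k d S α β) : Adj k d S α β :=
  Or.inr (Or.inr (Or.inr (Or.inr (Or.inr (Or.inl h)))))

theorem adj_of_bBack (h : BBack k d S α β) : Adj k d S α β :=
  Or.inr (Or.inr (Or.inr (Or.inr (Or.inr (Or.inr (Or.inl h))))))

variable {t : Tag} {i : ℕ} {p : Fin k → Option (Vec d)} {x y : Fin (k - 1) → Fin d}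

theorem mem_setL'_of_mem_setL'_coord (h : Vert.node (Tag.L' i) p x ∈ setL' k d S i) (y) :
    Vert.node (Tag.L' i) p y ∈ setL' k d S i := by
  obtain ⟨_, _, he, hrest⟩ := h
  cases he
  exact ⟨_, _, rfl, hrest⟩

theorem adj_of_mem_setL'_of_mem_setL (h : Vert.node (Tag.L' i) p x ∈ setL' k d S i)
    (h' : Vert.node (Tag.L i) p y ∈ setL k d S i) :
    Adj k d S (Vert.node (Tag.L' i) p x) (Vert.node (Tag.L i) p y) :=
  adj_of_coordE ⟨_, _, p, x, y, rfl, rfl, by simp, Or.inr (Or.inl ⟨i, h, h'⟩)⟩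

theorem adj_of_mem_setL_of_mem_setL' (h : Vert.node (Tag.L i) p x ∈ setL k d S i)
    (h' : Vert.node (Tag.L' i) p y ∈ setL' k d S i) :
    Adj k d S (Vert.node (Tag.L i) p x) (Vert.node (Tag.L' i) p y) :=
  adj_of_coordE ⟨_, _, p, x, y, rfl, rfl, by simp, Or.inr (Or.inr (Or.inl ⟨i, h, h'⟩))⟩

theorem distLE_one_of_mem_setL' (h : Vert.node (Tag.L' i) p x ∈ setL' k d S i) (y) :
    DistLE (Adj k d S) (Vert.node (Tag.L' i) p x) (Vert.node (Tag.L' i) p y) 1 :=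
  distLE_one_of_ne_imp fun hne => adj_of_coordE
    ⟨_, _, p, x, y, rfl, rfl, hne, Or.inl ⟨i, h, mem_setL'_of_mem_setL'_coord h y⟩⟩

theorem tag_eq_of_mem_setL (h : Vert.node t p x ∈ setL k d S i) : t = Tag.L i := by
  obtain ⟨_, _, he, -⟩ := h
  exact (Vert.node.inj he).1

theorem tag_eq_of_mem_setL' (h : Vert.node t p x ∈ setL' k d S i) : t = Tag.L' i := by
  obtain ⟨_, _, he, -⟩ := h
  exact (Vert.node.inj he).1

theorem fillsS_bitCond_of_mem_setL (h2 : 2 ≤ i) (hik : i ≤ k)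
    (h : Vert.node t p x ∈ setL k d S i) :
    FillsS k d S (fun n => n < k - i ∨ k - i + 2 ≤ n) p ∧ BitCond k d i p x := by
  obtain ⟨_, _, he, ⟨rfl, -⟩ | ⟨rfl, -⟩ | ⟨-, -, hp, hb⟩⟩ := h
  · omega
  · omega
  · cases he
    exact ⟨hp, hb⟩

end Edges

section Tuples

variable {k d : ℕ} {S : Finset (Vec d)} {F : ℕ → Prop} {p : Fin k → Option (Vec d)}

theorem FillsS.getD_mem (hone : ones d ∈ S) (hp : FillsS k d S F p) (j : Fin k) :
    (p j).getD (ones d) ∈ S := by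
  by_cases hF : F j
  · obtain ⟨a, haS, ha⟩ := (hp j).1 hF
    rwa [ha]
  · rwa [(hp j).2 hF]

def mixTuple (A B : Fin k → Vec d) (m : ℕ) : Fin k → Option (Vec d) := fun j =>
  if (j : ℕ) < k - m then some (A j) else if k - m + 2 ≤ (j : ℕ) then some (B j) else none

variable {A A' B B' : Fin k → Vec d} {m : ℕ} {j : Fin k}

theorem mixTuple_of_lt (hj : (j : ℕ) < k - m) : mixTuple A B m j = some (A j) := if_pos hj

theorem mixTuple_of_le (hj : k - m + 2 ≤ (j : ℕ)) : mixTuple A B m j = some (B j) := by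
  simp [mixTuple, hj, show ¬ (j : ℕ) < k - m by omega]

theorem mixTuple_eq_of_lt (hj : (j : ℕ) < k - m + 2) :
    mixTuple A B m j = mixTuple A B' m j := by
  unfold mixTuple
  split_ifs <;> first | rfl | omega

theorem mixTuple_eq_of_le (hj : k - m ≤ (j : ℕ)) : mixTuple A B m j = mixTuple A' B m j := by
  unfold mixTuple
  split_ifs <;> first | rfl | omega

theorem mixTuple_succ_eq (hj : (j : ℕ) ≠ k - m - 1) (hj' : (j : ℕ) ≠ k - m + 1) :
    mixTuple A B (m + 1) j = mixTuple A B m j := by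
  unfold mixTuple
  split_ifs <;> first | rfl | omega

theorem fillsS_mixTuple (hA : ∀ j, A j ∈ S) (hB : ∀ j, B j ∈ S) (m : ℕ) :
    FillsS k d S (fun n => n < k - m ∨ k - m + 2 ≤ n) (mixTuple A B m) := by
  intro j
  unfold mixTuple
  split_ifs with h1 h2
  · exact ⟨fun _ => ⟨A j, hA j, rfl⟩, fun h => absurd (Or.inl h1) h⟩
  · exact ⟨fun _ => ⟨B j, hB j, rfl⟩, fun h => absurd (Or.inr h2) h⟩
  · exact ⟨fun h => by omega, fun _ => rfl⟩

theorem mixTuple_getD (hp : FillsS k d S (fun n => n < k - m ∨ k - m + 2 ≤ n) p) :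
    mixTuple (fun j => (p j).getD (ones d)) (fun j => (p j).getD (ones d)) m = p := by
  funext j
  by_cases hF : (j : ℕ) < k - m ∨ k - m + 2 ≤ (j : ℕ)
  · obtain ⟨a, -, ha⟩ := (hp j).1 hF
    unfold mixTuple
    split_ifs <;> simp_all
  · rw [(hp j).2 hF]
    unfold mixTuple
    split_ifs <;> simp_all

theorem exists_eq_node_mixTuple (hone : ones d ∈ S) {α : Vert k d} {i : ℕ} (h3 : 3 ≤ i)
    (hik : i ≤ k - 1) (hα : α ∈ setL k d S i ∨ α ∈ setL' k d S i) :
    ∃ t A x, (∀ j, A j ∈ S) ∧ α = Vert.node t (mixTuple A A i) x := by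
  obtain ⟨t, p, x, rfl, hp⟩ : ∃ t p x, α = Vert.node t p x ∧
      FillsS k d S (fun n => n < k - i ∨ k - i + 2 ≤ n) p := by
    rcases hα with hα | ⟨p, x, rfl, -, -, hp⟩
    · obtain ⟨p, x, rfl, -⟩ := id hα
      exact ⟨_, p, x, rfl, (fillsS_bitCond_of_mem_setL (by omega) (by omega) hα).1⟩
    · exact ⟨_, p, x, rfl, hp⟩
  exact ⟨t, _, x, hp.getD_mem hone, by rw [mixTuple_getD hp]⟩

end Tuples

section MixPath

variable {k d : ℕ} {S : Finset (Vec d)} {A B : Fin k → Vec d} {x : Fin (k - 1) → Fin d}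
  {m : ℕ}

/-- Every `x ℓ` is a common 1-coordinate of `A_0, …, A_{k-ℓ-2}, B_{k-ℓ-1}, …, B_{k-1}`
(0-based), which is exactly what every `mixTuple A B m` requires of the array `x`. -/
def IsMixArray (A B : Fin k → Vec d) (x : Fin (k - 1) → Fin d) : Prop :=
  ∀ (ℓ : Fin (k - 1)) (j : Fin k),
    ((j : ℕ) + ℓ + 1 < k → A j (x ℓ) = true) ∧
      (k ≤ (j : ℕ) + ℓ + 1 → B j (x ℓ) = true)

theorem exists_isMixArray
    (hno : ∀ f : Fin k → Vec d, (∀ j, f j ∈ S) → ∃ x : Fin d, ∀ j, f j x = true)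
    (hA : ∀ j, A j ∈ S) (hB : ∀ j, B j ∈ S) : ∃ x, IsMixArray A B x := by
  choose x hx using fun ℓ : Fin (k - 1) =>
    hno (fun j => if (j : ℕ) + ℓ + 1 < k then A j else B j)
      (fun j => by split_ifs; exacts [hA j, hB j])
  refine ⟨x, fun ℓ j => ⟨fun h => ?_, fun h => ?_⟩⟩
  · simpa [h] using hx ℓ j
  · simpa [show ¬ ((j : ℕ) + ℓ + 1 < k) by omega] using hx ℓ j

theorem bitCond_mixTuple (hx : IsMixArray A B x) (m : ℕ) :
    BitCond k d m (mixTuple A B m) x := by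
  refine ⟨fun j hj w hw ℓ hℓ => ?_, fun j hj w hw ℓ hℓ => ?_⟩
  · rw [mixTuple_of_lt hj, Option.some_inj] at hw
    exact hw ▸ (hx ℓ j).1 (by omega)
  · rw [mixTuple_of_le hj, Option.some_inj] at hw
    exact hw ▸ (hx ℓ j).2 (by omega)

theorem bitCond_mixTuple_of_succ (hA : ∀ j : Fin k, (j : ℕ) = k - m - 1 → A j = ones d)
    (h : BitCond k d (m + 1) (mixTuple A B (m + 1)) x) :
    BitCond k d m (mixTuple A B m) x := by
  refine ⟨fun j hj w hw ℓ hℓ => ?_, fun j hj w hw ℓ hℓ => ?_⟩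
  · rw [mixTuple_of_lt hj, Option.some_inj] at hw
    subst hw
    by_cases hj' : (j : ℕ) = k - m - 1
    · rw [hA j hj']
      rfl
    · exact h.1 j (by omega) _ (mixTuple_of_lt (by omega)) ℓ hℓ
  · rw [mixTuple_of_le hj] at hw
    exact h.2 j (by omega) w (by rw [mixTuple_of_le (by omega), hw]) ℓ hℓ

theorem mem_setL_of_bitCond (h2 : 2 ≤ m) (hm : m ≤ k) (hA : ∀ j, A j ∈ S)
    (hB : ∀ j, B j ∈ S) (hb : BitCond k d m (mixTuple A B m) x) :
    Vert.node (Tag.L m) (mixTuple A B m) x ∈ setL k d S m :=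
  ⟨_, _, rfl, Or.inr (Or.inr ⟨h2, hm, fillsS_mixTuple hA hB m, hb⟩)⟩

theorem mem_setL' (h3 : 3 ≤ m) (hm : m ≤ k - 1) (hA : ∀ j, A j ∈ S) (hB : ∀ j, B j ∈ S)
    (x : Fin (k - 1) → Fin d) : Vert.node (Tag.L' m) (mixTuple A B m) x ∈ setL' k d S m :=
  ⟨_, _, rfl, h3, hm, fillsS_mixTuple hA hB m⟩

theorem swapE_mixTuple (h2 : 2 ≤ m) (hm : m ≤ k - 1)
    (h : Vert.node (Tag.L m) (mixTuple A B m) x ∈ setL k d S m)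
    (h' : Vert.node (Tag.L (m + 1)) (mixTuple A B (m + 1)) x ∈ setL k d S (m + 1)) :
    SwapE k d S (Vert.node (Tag.L m) (mixTuple A B m) x)
      (Vert.node (Tag.L (m + 1)) (mixTuple A B (m + 1)) x) :=
  Or.inl ⟨m, _, x, _, x, h2, hm, rfl, rfl, h, h', rfl, fun _ hj hj' => mixTuple_succ_eq hj hj'⟩

theorem hasWalkLen_mixTuple (hA : ∀ j, A j ∈ S) (hB : ∀ j, B j ∈ S) (hx : IsMixArray A B x)
    {m' : ℕ} (h2 : 2 ≤ m) (hmm' : m ≤ m') (hm' : m' ≤ k) :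
    HasWalkLen (Adj k d S) (m' - m) (Vert.node (Tag.L m) (mixTuple A B m) x)
      (Vert.node (Tag.L m') (mixTuple A B m') x) := by
  induction m', hmm' using Nat.le_induction with
  | base => simp only [Nat.sub_self]; rfl
  | succ n hmn ih =>
    rw [show n + 1 - m = n - m + 1 by omega]
    have hL : ∀ l, 2 ≤ l → l ≤ k →
        Vert.node (Tag.L l) (mixTuple A B l) x ∈ setL k d S l := fun l hl hlk =>
      mem_setL_of_bitCond hl hlk hA hB (bitCond_mixTuple hx l)
    exact (ih (by omega)).append (HasWalkLen.single (adj_of_swapE (swapE_mixTuple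
      (by omega) (by omega) (hL n (by omega) (by omega)) (hL (n + 1) (by omega) hm'))))

end MixPath

section EntryExit

variable {k d : ℕ} {S : Finset (Vec d)} {A B : Fin k → Vec d} {x y : Fin (k - 1) → Fin d}
  {t : Tag} {i : ℕ}

theorem vecE_mixTuple_three (hk : 4 ≤ k) {B' : Fin k → Vec d}
    (h : Vert.node (Tag.L 3) (mixTuple A B 3) x ∈ setL k d S 3)
    (h' : Vert.node (Tag.L' 3) (mixTuple A B' 3) x ∈ setL' k d S 3) :
    VecE k d S (Vert.node (Tag.L 3) (mixTuple A B 3) x)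
      (Vert.node (Tag.L' 3) (mixTuple A B' 3) x) :=
  ⟨3, _, x, _, x, le_rfl, by omega, rfl, rfl, h, h', rfl,
    Or.inr fun j hj => (mixTuple_eq_of_lt (by omega)).symm⟩

theorem vecE_mixTuple_top (hk : 4 ≤ k) {A' : Fin k → Vec d}
    (h : Vert.node (Tag.L (k - 1)) (mixTuple A B (k - 1)) x ∈ setL k d S (k - 1))
    (h' : Vert.node (Tag.L' (k - 1)) (mixTuple A' B (k - 1)) x ∈ setL' k d S (k - 1)) :
    VecE k d S (Vert.node (Tag.L (k - 1)) (mixTuple A B (k - 1)) x)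
      (Vert.node (Tag.L' (k - 1)) (mixTuple A' B (k - 1)) x) :=
  ⟨k - 1, _, x, _, x, by omega, le_rfl, rfl, rfl, h, h', rfl,
    Or.inl fun j hj => (mixTuple_eq_of_le (by omega)).symm⟩

theorem hasWalkLen_two_via_setA (hd : 0 < d) (hA : ∀ j, A j ∈ S) (h4 : 4 ≤ i)
    (hik : i ≤ k - 1) {p q : Fin k → Option (Vec d)} {z : Fin (k - 1) → Fin d}
    (hα : Vert.node t p y ∈ setL k d S i ∨ Vert.node t p y ∈ setL' k d S i)
    (hp : ∀ j : Fin k, (j : ℕ) < k - i → p j = some (A j))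
    (hγ : Vert.node (Tag.L' 4) q z ∈ setL' k d S 4)
    (hq : ∀ j : Fin k, (j : ℕ) < k - i → q j = some (A j)) :
    HasWalkLen (Adj k d S) 2 (Vert.node t p y) (Vert.node (Tag.L' 4) q z) := by
  let a : Vert k d :=
    Vert.node (Tag.A i) (fun j => if (j : ℕ) < k - i then some (A j) else none)
      fun _ => ⟨0, hd⟩
  have ha : a ∈ setA k d S i := by
    refine ⟨_, _, rfl, h4, hik, fun j => ?_, fun _ => rfl⟩
    by_cases hj : (j : ℕ) < k - i <;> simp [hj, hA j]
  refine ⟨a, adj_of_aBack (Or.inl ⟨i, t, p, y, _, _, hα, ha, rfl, rfl, fun j hj => ?_⟩),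
    HasWalkLen.single (adj_of_aBack (Or.inr (Or.inl ⟨i, _, _, q, z, ha, hγ, rfl, rfl,
      fun j hj => ?_⟩)))⟩
  · rw [if_pos hj, hp j hj]
  · rw [if_pos hj, hq j hj]

theorem hasWalkLen_two_via_setB (hd : 0 < d) (hB : ∀ j, B j ∈ S) (h3 : 3 ≤ i)
    (hik : i ≤ k - 2) {p q : Fin k → Option (Vec d)} {z : Fin (k - 1) → Fin d}
    (hβ : Vert.node t p y ∈ setL k d S i ∨ Vert.node t p y ∈ setL' k d S i)
    (hp : ∀ j : Fin k, k - i + 2 ≤ (j : ℕ) → p j = some (B j))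
    (hγ : Vert.node (Tag.L' (k - 2)) q z ∈ setL' k d S (k - 2))
    (hq : ∀ j : Fin k, k - i + 2 ≤ (j : ℕ) → q j = some (B j)) :
    HasWalkLen (Adj k d S) 2 (Vert.node (Tag.L' (k - 2)) q z) (Vert.node t p y) := by
  let b : Vert k d := Vert.node (Tag.B i)
    (fun j => if k - i + 2 ≤ (j : ℕ) then some (B j) else none) fun _ => ⟨0, hd⟩
  have hb : b ∈ setB k d S i := by
    refine ⟨_, _, rfl, h3, hik, fun j => ?_, fun _ => rfl⟩
    by_cases hj : k - i + 2 ≤ (j : ℕ) <;> simp [hj, hB j]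
  refine ⟨b,
    adj_of_bBack (Or.inr (Or.inl ⟨i, q, z, _, _, hγ, hb, rfl, rfl, fun j hj => ?_⟩)),
    HasWalkLen.single (adj_of_bBack (Or.inl ⟨i, t, _, _, p, y, hb, hβ, rfl, rfl,
      fun j hj => ?_⟩))⟩
  · rw [if_pos hj, hq j hj]
  · rw [if_pos hj, hp j hj]

theorem distLE_head_three (hk : 4 ≤ k) (hA : ∀ j, A j ∈ S) (hB : ∀ j, B j ∈ S)
    (hx : IsMixArray A B x)
    (hα : Vert.node t (mixTuple A A 3) y ∈ setL k d S 3 ∨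
      Vert.node t (mixTuple A A 3) y ∈ setL' k d S 3) :
    DistLE (Adj k d S) (Vert.node t (mixTuple A A 3) y)
      (Vert.node (Tag.L 3) (mixTuple A B 3) x) 2 := by
  have hP : Vert.node (Tag.L 3) (mixTuple A B 3) x ∈ setL k d S 3 :=
    mem_setL_of_bitCond (by omega) (by omega) hA hB (bitCond_mixTuple hx 3)
  rcases hα with hα | hα
  · obtain rfl := tag_eq_of_mem_setL hα
    have hP' := mem_setL' le_rfl (by omega) hA hB y
    exact ⟨2, le_rfl, _, adj_of_vecE (vecE_mixTuple_three (by omega) hα hP'),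
      HasWalkLen.single (adj_of_mem_setL'_of_mem_setL hP' hP)⟩
  · obtain rfl := tag_eq_of_mem_setL' hα
    exact (distLE_one_of_mem_setL' hα x).trans ((HasWalkLen.single (adj_of_vecE_symm
      (vecE_mixTuple_three (by omega) hP (mem_setL'_of_mem_setL'_coord hα x)))).distLE le_rfl)

theorem hasWalkLen_head_four (hA : ∀ j, A j ∈ S) (hB : ∀ j, B j ∈ S)
    (hx : IsMixArray A B x) (hd : 0 < d) (h4 : 4 ≤ i) (hik : i ≤ k - 1)
    (hα : Vert.node t (mixTuple A A i) y ∈ setL k d S i ∨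
      Vert.node t (mixTuple A A i) y ∈ setL' k d S i) :
    HasWalkLen (Adj k d S) 3 (Vert.node t (mixTuple A A i) y)
      (Vert.node (Tag.L 4) (mixTuple A B 4) x) :=
  have hP' := mem_setL' (m := 4) (by omega) (by omega) hA hB x
  (hasWalkLen_two_via_setA hd hA h4 hik hα (fun _ hj => mixTuple_of_lt hj) hP'
    fun _ hj => mixTuple_of_lt (by omega)).append (HasWalkLen.single
      (adj_of_mem_setL'_of_mem_setL hP'
        (mem_setL_of_bitCond (by omega) (by omega) hA hB (bitCond_mixTuple hx 4))))

theorem distLE_tail_top (hk : 4 ≤ k) (hA : ∀ j, A j ∈ S) (hB : ∀ j, B j ∈ S)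
    (hx : IsMixArray A B x)
    (hβ : Vert.node t (mixTuple B B (k - 1)) y ∈ setL k d S (k - 1) ∨
      Vert.node t (mixTuple B B (k - 1)) y ∈ setL' k d S (k - 1)) :
    DistLE (Adj k d S) (Vert.node (Tag.L (k - 1)) (mixTuple A B (k - 1)) x)
      (Vert.node t (mixTuple B B (k - 1)) y) 2 := by
  have hP := mem_setL_of_bitCond (by omega) (by omega) hA hB (bitCond_mixTuple hx (k - 1))
  have hP' := mem_setL' (by omega) le_rfl hB hB x
  have e := HasWalkLen.single (adj_of_vecE (vecE_mixTuple_top (by omega) hP hP'))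
  rcases hβ with hβ | hβ
  · obtain rfl := tag_eq_of_mem_setL hβ
    exact (e.append (HasWalkLen.single (adj_of_mem_setL'_of_mem_setL hP' hβ))).distLE le_rfl
  · obtain rfl := tag_eq_of_mem_setL' hβ
    exact (e.distLE le_rfl).trans (distLE_one_of_mem_setL' hP' y)

theorem hasWalkLen_tail_below (hA : ∀ j, A j ∈ S) (hB : ∀ j, B j ∈ S)
    (hx : IsMixArray A B x) (hd : 0 < d) (h3 : 3 ≤ i) (hik : i ≤ k - 2)
    (hβ : Vert.node t (mixTuple B B i) y ∈ setL k d S i ∨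
      Vert.node t (mixTuple B B i) y ∈ setL' k d S i) :
    HasWalkLen (Adj k d S) 3 (Vert.node (Tag.L (k - 2)) (mixTuple A B (k - 2)) x)
      (Vert.node t (mixTuple B B i) y) :=
  have hP' := mem_setL' (m := k - 2) (by omega) (by omega) hA hB x
  ⟨_, adj_of_mem_setL_of_mem_setL'
      (mem_setL_of_bitCond (by omega) (by omega) hA hB (bitCond_mixTuple hx (k - 2))) hP',
    hasWalkLen_two_via_setB hd hB h3 hik hβ (fun _ hj => mixTuple_of_le hj) hP'
      fun _ hj => mixTuple_of_le (by omega)⟩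

theorem distLE_head (hA : ∀ j, A j ∈ S) (hB : ∀ j, B j ∈ S)
    (hx : IsMixArray A B x) (hd : 0 < d) (h3 : 3 ≤ i) (hik : i ≤ k - 1)
    (hα : Vert.node t (mixTuple A A i) y ∈ setL k d S i ∨
      Vert.node t (mixTuple A A i) y ∈ setL' k d S i) :
    DistLE (Adj k d S) (Vert.node t (mixTuple A A i) y)
      (Vert.node (Tag.L (min i 4)) (mixTuple A B (min i 4)) x) (min i 4 - 1) := by
  rcases (show i = 3 ∨ 4 ≤ i by omega) with rfl | h4
  · exact distLE_head_three (by omega) hA hB hx hα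
  · rw [min_eq_right h4]
    exact (hasWalkLen_head_four hA hB hx hd h4 hik hα).distLE le_rfl

theorem distLE_tail (hA : ∀ j, A j ∈ S) (hB : ∀ j, B j ∈ S)
    (hx : IsMixArray A B x) (hd : 0 < d) (h3 : 3 ≤ i) (hik : i ≤ k - 1)
    (hβ : Vert.node t (mixTuple B B i) y ∈ setL k d S i ∨
      Vert.node t (mixTuple B B i) y ∈ setL' k d S i) :
    DistLE (Adj k d S) (Vert.node (Tag.L (max i (k - 2))) (mixTuple A B (max i (k - 2))) x)
      (Vert.node t (mixTuple B B i) y) (k + 1 - max i (k - 2)) := by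
  rcases (show i = k - 1 ∨ i ≤ k - 2 by omega) with rfl | hik'
  · rw [max_eq_left (by omega)]
    exact (distLE_tail_top (by omega) hA hB hx hβ).mono (by omega)
  · rw [max_eq_right hik']
    exact (hasWalkLen_tail_below hA hB hx hd h3 hik' hβ).distLE (by omega)

end EntryExit

section Main

variable {k d : ℕ} {S : Finset (Vec d)}

theorem exists_mem_setL_distLE_one (hone : ones d ∈ S)
    (hno : ∀ f : Fin k → Vec d, (∀ j, f j ∈ S) → ∃ x : Fin d, ∀ j, f j x = true)
    {α : Vert k d} {i : ℕ} (hα : α ∈ setL k d S i ∨ α ∈ setL' k d S i) :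
    ∃ p x, Vert.node (Tag.L i) p x ∈ setL k d S i ∧
      DistLE (Adj k d S) α (Vert.node (Tag.L i) p x) 1 := by
  rcases hα with hα | ⟨p, x, rfl, h3, hik, hp⟩
  · obtain ⟨p, x, rfl, -⟩ := id hα
    exact ⟨p, x, hα, 0, zero_le_one, rfl⟩
  · obtain ⟨c, hc⟩ := hno (fun j => (p j).getD (ones d)) (hp.getD_mem hone)
    have hb : BitCond k d i p fun _ => c := by
      refine ⟨fun j _ w hw _ _ => ?_, fun j _ w hw _ _ => ?_⟩ <;> simpa [hw] using hc j
    have hL : Vert.node (Tag.L i) p (fun _ => c) ∈ setL k d S i :=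
      ⟨p, _, rfl, Or.inr (Or.inr ⟨by omega, by omega, hp, hb⟩)⟩
    exact ⟨p, _, hL, (HasWalkLen.single
      (adj_of_mem_setL'_of_mem_setL ⟨p, x, rfl, h3, hik, hp⟩ hL)).distLE le_rfl⟩

theorem distLE_five_of_four_three (hone : ones d ∈ S)
    (hno : ∀ f : Fin 5 → Vec d, (∀ j, f j ∈ S) → ∃ x : Fin d, ∀ j, f j x = true)
    {α : Vert 5 d} {B : Fin 5 → Vec d} (hB : ∀ j, B j ∈ S) {t : Tag}
    {y : Fin (5 - 1) → Fin d} (hα : α ∈ setL 5 d S 4 ∨ α ∈ setL' 5 d S 4)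
    (hβ : Vert.node t (mixTuple B B 3) y ∈ setL 5 d S 3 ∨
      Vert.node t (mixTuple B B 3) y ∈ setL' 5 d S 3) :
    DistLE (Adj 5 d S) α (Vert.node t (mixTuple B B 3) y) 5 := by
  obtain ⟨c, -⟩ := hno (fun _ => ones d) fun _ => hone
  obtain ⟨p, x, hL4, hα4⟩ := exists_mem_setL_distLE_one hone hno hα
  obtain ⟨hp, hb⟩ := fillsS_bitCond_of_mem_setL (by omega) (by omega) hL4
  -- swapping down to `L_3` opens the slot `a_2`, which gets the all-ones vector
  obtain ⟨A, hA, hA1, rfl⟩ : ∃ A : Fin 5 → Vec d, (∀ j, A j ∈ S) ∧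
      (∀ j : Fin 5, (j : ℕ) = 1 → A j = ones d) ∧ p = mixTuple A A 4 :=
    ⟨_, hp.getD_mem hone, fun j hj => by simp [(hp j).2 (by omega)],
      (mixTuple_getD hp).symm⟩
  have hL3 : Vert.node (Tag.L 3) (mixTuple A A 3) x ∈ setL 5 d S 3 :=
    mem_setL_of_bitCond (by omega) (by omega) hA hA (bitCond_mixTuple_of_succ hA1 hb)
  have hL3' := mem_setL' (m := 3) le_rfl (by omega) hA hB x
  have hwalk : HasWalkLen (Adj 5 d S) 4 (Vert.node (Tag.L 4) (mixTuple A A 4) x)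
      (Vert.node t (mixTuple B B 3) y) :=
    ⟨_, adj_of_swapE_symm (swapE_mixTuple (m := 3) (by omega) (by omega) hL3 hL4),
      _, adj_of_vecE (vecE_mixTuple_three (by omega) hL3 hL3'),
      hasWalkLen_two_via_setB c.pos hB le_rfl (by omega) hβ (fun _ hj => mixTuple_of_le hj)
        hL3' fun _ hj => mixTuple_of_le hj⟩
  exact hα4.trans (hwalk.distLE le_rfl)

end Main

theorem case3_no_instance_general (k d : ℕ) (hk : 5 ≤ k)
    (S : Finset (Vec d)) (hone : ones d ∈ S)
    (hno : ∀ f : Fin k → Vec d, (∀ j, f j ∈ S) → ∃ x : Fin d, ∀ j, f j x = true)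
    (α β : Vert k d)
    (hα : ∃ i, 3 ≤ i ∧ i ≤ k - 1 ∧ (α ∈ setL k d S i ∨ α ∈ setL' k d S i))
    (hβ : ∃ i, 3 ≤ i ∧ i ≤ k - 1 ∧ (β ∈ setL k d S i ∨ β ∈ setL' k d S i)) :
    DistLE (Adj k d S) α β k := by
  obtain ⟨i, hi3, hik, hα⟩ := hα
  obtain ⟨i', hi'3, hi'k, hβ⟩ := hβ
  obtain ⟨t', B, y', hB, rfl⟩ := exists_eq_node_mixTuple hone hi'3 hi'k hβ
  by_cases hclimbs : min i 4 ≤ max i' (k - 2)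
  · obtain ⟨c, -⟩ := hno (fun _ => ones d) fun _ => hone
    obtain ⟨t, A, y, hA, rfl⟩ := exists_eq_node_mixTuple hone hi3 hik hα
    obtain ⟨x, hx⟩ := exists_isMixArray hno hA hB
    have hhead := distLE_head hA hB hx c.pos hi3 hik hα
    have hclimb := (hasWalkLen_mixTuple hA hB hx (by omega) hclimbs (by omega)).distLE le_rfl
    have htail := distLE_tail hA hB hx c.pos hi'3 hi'k hβ
    exact ((hhead.trans hclimb).trans htail).mono (by omega)
  · obtain rfl : k = 5 := by omega
    obtain rfl : i = 4 := by omega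
    obtain rfl : i' = 3 := by omega
    exact distLE_five_of_four_three hone hno hB hα hβ

/-- **Section 4.2, Case 3.**  Assume `S` is a NO instance of `k`-OV:
every `k` vectors of `S` (repetitions allowed) have a common coordinate at which they
all equal `1`.  Then for all vertices `α, β ∈ L_3 ∪ ⋯ ∪ L_{k-1} ∪ L'_3 ∪ ⋯ ∪ L'_{k-1}`,
we have `d(α,β) ≤ k`. -/
theorem case3_no_instance (k d : ℕ) (hk : 5 ≤ k) (hd : 1 ≤ d)
    (S : Finset (Vec d)) (hone : ones d ∈ S)
    (hno : ∀ f : Fin k → Vec d, (∀ j, f j ∈ S) → ∃ x : Fin d, ∀ j, f j x = true)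
    (α β : Vert k d)
    (hα : ∃ i, 3 ≤ i ∧ i ≤ k - 1 ∧ (α ∈ setL k d S i ∨ α ∈ setL' k d S i))
    (hβ : ∃ i, 3 ≤ i ∧ i ≤ k - 1 ∧ (β ∈ setL k d S i ∨ β ∈ setL' k d S i)) :
    DistLE (Adj k d S) α β k :=
  case3_no_instance_general k d hk S hone hno α β hα hβ

end DiamLB
end
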